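/- arXiv:2510.12961 — 9 statements merged into one kernel-verified Lean document; each statement's English description precedes it below -/
import Mathlib

section
/- Fix positive integers s and K with s ≤ K and a real number μ > 0. Define coefficients a_n = 1/n! for 0 ≤ n < s and a_n = 1/(s^{n−s}·s!) for s ≤ n ≤ K. Let N(τ) = Σ_{n=1}^{K} n·a_n·τ^{n−1} and D(τ) = Σ_{m=0}^{K−1} a_m·τ^m, and define the average waiting time of the M/M/s/K queue by w̄(λ) = N(λ/μ) / (μ·D(λ/μ)) for λ ≥ 0. Then w̄ is monotone nondecreasing on [0, ∞): for all real numbers 0 ≤ λ₁ ≤ λ₂, w̄(λ₁) ≤ w̄(λ₂). -/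
lemma mmsk_pow_cross {x y : ℝ} (hx : 0 ≤ x) (hxy : x ≤ y) {m n : ℕ} (hmn : m ≤ n) :
    x ^ n * y ^ m ≤ y ^ n * x ^ m := by
  obtain ⟨d, rfl⟩ := Nat.exists_eq_add_of_le hmn
  rw [pow_add, pow_add]
  have hy : 0 ≤ y := hx.trans hxy
  calc x ^ m * x ^ d * y ^ m = x ^ d * (x ^ m * y ^ m) := by ring
    _ ≤ y ^ d * (x ^ m * y ^ m) :=
        mul_le_mul_of_nonneg_right (pow_le_pow_left₀ hx hxy d) (by positivity)
    _ = y ^ m * y ^ d * x ^ m := by ring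

lemma mmsk_key (F : Finset ℕ) (b c : ℕ → ℝ)
    (hcross : ∀ i ∈ F, ∀ j ∈ F, i ≤ j → b i * c j ≤ b j * c i)
    {x y : ℝ} (hx : 0 ≤ x) (hxy : x ≤ y) :
    (∑ n ∈ F, b n * x ^ n) * (∑ m ∈ F, c m * y ^ m) ≤
    (∑ n ∈ F, b n * y ^ n) * (∑ m ∈ F, c m * x ^ m) := by
  rw [Finset.sum_mul_sum, Finset.sum_mul_sum, ← sub_nonneg]
  set g : ℕ → ℕ → ℝ := fun n m =>
    b n * y ^ n * (c m * x ^ m) - b n * x ^ n * (c m * y ^ m) with hg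
  have hsub : (∑ n ∈ F, ∑ m ∈ F, b n * y ^ n * (c m * x ^ m)) -
      ∑ n ∈ F, ∑ m ∈ F, b n * x ^ n * (c m * y ^ m) = ∑ n ∈ F, ∑ m ∈ F, g n m := by
    rw [← Finset.sum_sub_distrib]
    exact Finset.sum_congr rfl fun n _ => by rw [← Finset.sum_sub_distrib]
  rw [hsub]
  have hcomm : (∑ n ∈ F, ∑ m ∈ F, g n m) = ∑ n ∈ F, ∑ m ∈ F, g m n := Finset.sum_comm
  have h2 : (2:ℝ) * (∑ n ∈ F, ∑ m ∈ F, g n m) = ∑ n ∈ F, ∑ m ∈ F, (g n m + g m n) := by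
    rw [two_mul]
    nth_rewrite 2 [hcomm]
    rw [← Finset.sum_add_distrib]
    exact Finset.sum_congr rfl fun n _ => by rw [← Finset.sum_add_distrib]
  have hpt : ∀ n ∈ F, ∀ m ∈ F, 0 ≤ g n m + g m n := by
    intro n hn m hm
    have key : g n m + g m n = (b n * c m - b m * c n) * (y ^ n * x ^ m - x ^ n * y ^ m) := by
      simp only [hg]; ring
    rw [key]
    rcases le_total n m with h | h
    · have h1 : b n * c m - b m * c n ≤ 0 := sub_nonpos.mpr (hcross n hn m hm h)
      have h2 : y ^ n * x ^ m - x ^ n * y ^ m ≤ 0 := by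
        have := mmsk_pow_cross hx hxy h; linarith
      nlinarith [h1, h2]
    · have h1 : 0 ≤ b n * c m - b m * c n := sub_nonneg.mpr (hcross m hm n hn h)
      have h2 : 0 ≤ y ^ n * x ^ m - x ^ n * y ^ m :=
        sub_nonneg.mpr (mmsk_pow_cross hx hxy h)
      exact mul_nonneg h1 h2
  have hsumnn : 0 ≤ ∑ n ∈ F, ∑ m ∈ F, (g n m + g m n) :=
    Finset.sum_nonneg fun n hn => Finset.sum_nonneg fun m hm => hpt n hn m hm
  linarith [h2 ▸ hsumnn]

/-- The average waiting time of the `M/M/s/K` queue is nondecreasing in the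
arrival rate `λ`. -/
theorem mmsk_avg_waiting_time_monotone
    (s K : ℕ) (hs : 0 < s) (hsK : s ≤ K) (μ : ℝ) (hμ : 0 < μ)
    (a : ℕ → ℝ)
    (ha1 : ∀ n, n < s → a n = 1 / (n.factorial : ℝ))
    (ha2 : ∀ n, s ≤ n → n ≤ K → a n = 1 / ((s : ℝ) ^ (n - s) * (s.factorial : ℝ)))
    (w : ℝ → ℝ)
    (hw : ∀ lam : ℝ, 0 ≤ lam →
      w lam = (∑ n ∈ Finset.Icc 1 K, (n : ℝ) * a n * (lam / μ) ^ (n - 1)) /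
        (μ * ∑ m ∈ Finset.range K, a m * (lam / μ) ^ m)) :
    ∀ lam₁ lam₂ : ℝ, 0 ≤ lam₁ → lam₁ ≤ lam₂ → w lam₁ ≤ w lam₂ := by
  intro lam₁ lam₂ hl1 hl12
  have hl2 : 0 ≤ lam₂ := hl1.trans hl12
  rw [hw lam₁ hl1, hw lam₂ hl2]
  set x := lam₁ / μ with hxdef
  set y := lam₂ / μ with hydef
  have hx : 0 ≤ x := div_nonneg hl1 hμ.le
  have hxy : x ≤ y := by rw [hxdef, hydef]; gcongr
  -- positivity of a
  have hapos : ∀ n, n ≤ K → 0 < a n := by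
    intro n hn
    rcases lt_or_ge n s with h | h
    · rw [ha1 n h]; positivity
    · rw [ha2 n h hn]; positivity
  have haval1 : ∀ m, m ≤ s → a m = 1 / (m.factorial : ℝ) := by
    intro m hm
    rcases lt_or_eq_of_le hm with h | h
    · exact ha1 m h
    · subst h; rw [ha2 m le_rfl hsK]; simp
  -- reindex N
  have hN : ∀ t : ℝ, (∑ n ∈ Finset.Icc 1 K, (n : ℝ) * a n * t ^ (n - 1)) =
      ∑ m ∈ Finset.range K, ((m + 1 : ℕ) : ℝ) * a (m + 1) * t ^ m := by
    intro t
    rw [show Finset.Icc 1 K = Finset.Ico 1 (K + 1) by rw [Finset.Ico_add_one_right_eq_Icc],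
      Finset.sum_Ico_eq_sum_range]
    refine Finset.sum_congr (by norm_num) fun i hi => ?_
    have h1 : 1 + i = i + 1 := by omega
    rw [h1]
    norm_num
  -- cross condition
  have hcross : ∀ i ∈ Finset.range K, ∀ j ∈ Finset.range K, i ≤ j →
      (((i + 1 : ℕ) : ℝ) * a (i + 1)) * a j ≤ (((j + 1 : ℕ) : ℝ) * a (j + 1)) * a i := by
    intro i hi j hj hij
    rw [Finset.mem_range] at hi hj
    have hfi : (0:ℝ) < (Nat.factorial i : ℝ) := by exact_mod_cast Nat.factorial_pos i
    have hfj : (0:ℝ) < (Nat.factorial j : ℝ) := by exact_mod_cast Nat.factorial_pos j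
    have hfs : (0:ℝ) < (Nat.factorial s : ℝ) := by exact_mod_cast Nat.factorial_pos s
    have hsr : (0:ℝ) < (s:ℝ) := by exact_mod_cast hs
    have key : ∀ m, m + 1 ≤ s → ((m + 1 : ℕ) : ℝ) * a (m + 1) = 1 / (m.factorial : ℝ) := by
      intro m hm
      have hfm : (0:ℝ) < (Nat.factorial m : ℝ) := by exact_mod_cast Nat.factorial_pos m
      rw [haval1 (m+1) hm, Nat.factorial_succ]
      push_cast
      field_simp
    rcases le_or_gt (j + 1) s with hjs | hjs
    · rw [key i (by omega), key j hjs, haval1 i (by omega), haval1 j (by omega)]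
      exact le_of_eq (by ring)
    · rcases le_or_gt (i + 1) s with his | his
      · -- i small, j large
        have hsj : s ≤ j := by omega
        obtain ⟨dj, rfl⟩ : ∃ d, j = s + d := ⟨j - s, by omega⟩
        have e1 : s + dj - s = dj := by omega
        have e2 : s + dj + 1 - s = dj + 1 := by omega
        rw [key i his, haval1 i (by omega), ha2 (s+dj) (by omega) (by omega),
          ha2 (s+dj+1) (by omega) (by omega), e1, e2, pow_succ]
        have hp : (0:ℝ) < (s:ℝ) ^ dj := by positivity
        push_cast
        field_simp
        have h1 : (1:ℝ) ≤ (s:ℝ) + dj + 1 - (s:ℝ) := by push_cast; linarith [Nat.cast_nonneg (α := ℝ) dj]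
        nlinarith [mul_pos (mul_pos hfi hfs) hp, mul_pos hp (mul_pos hfi hfs), hsr,
          mul_pos (mul_pos hp hfs) (mul_pos hfi hfs)]
      · -- both large
        have hsi : s ≤ i := by omega
        obtain ⟨di, rfl⟩ : ∃ d, i = s + d := ⟨i - s, by omega⟩
        obtain ⟨dj, rfl⟩ : ∃ d, j = s + d := ⟨j - s, by omega⟩
        have e1 : s + di - s = di := by omega
        have e2 : s + di + 1 - s = di + 1 := by omega
        have e3 : s + dj - s = dj := by omega
        have e4 : s + dj + 1 - s = dj + 1 := by omega
        have hdij : di ≤ dj := by omega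
        rw [ha2 (s+di) (by omega) (by omega), ha2 (s+dj) (by omega) (by omega),
          ha2 (s+di+1) (by omega) (by omega), ha2 (s+dj+1) (by omega) (by omega),
          e1, e2, e3, e4, pow_succ, pow_succ]
        have hpi : (0:ℝ) < (s:ℝ) ^ di := by positivity
        have hpj : (0:ℝ) < (s:ℝ) ^ dj := by positivity
        push_cast
        field_simp
        have hle : ((s:ℝ) + di + 1) ≤ ((s:ℝ) + dj + 1) := by
          have : (di:ℝ) ≤ (dj:ℝ) := by exact_mod_cast hdij
          linarith
        nlinarith [mul_pos (mul_pos hpi hpj) (mul_pos hsr (mul_pos hfs hfs)), hle,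
          mul_pos hpi hpj, mul_pos hfs hfs]
  -- D positivity
  have hD : ∀ t : ℝ, 0 ≤ t → 0 < ∑ m ∈ Finset.range K, a m * t ^ m := by
    intro t ht
    apply Finset.sum_pos'
    · intro m hm
      rw [Finset.mem_range] at hm
      exact mul_nonneg (hapos m (by omega)).le (pow_nonneg ht m)
    · exact ⟨0, Finset.mem_range.mpr (by omega), by simpa using hapos 0 (by omega)⟩
  have hy' : 0 ≤ y := hx.trans hxy
  have hDx := hD x hx
  have hDy := hD y hy'
  rw [div_le_div_iff₀ (mul_pos hμ hDx) (mul_pos hμ hDy), hN x, hN y]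
  have main := mmsk_key (Finset.range K) (fun m => ((m + 1 : ℕ) : ℝ) * a (m + 1)) a hcross hx hxy
  nlinarith [mul_le_mul_of_nonneg_left main hμ.le]
end

section
/- Fix positive integers s and K with s ≤ K. Define coefficients a_n = 1/n! for 0 ≤ n < s and a_n = 1/(s^{n−s}·s!) for s ≤ n ≤ K, and let N(τ) = Σ_{n=1}^{K} n·a_n·τ^{n−1} and D(τ) = Σ_{m=0}^{K−1} a_m·τ^m. Then for all real numbers 0 ≤ τ₁ ≤ τ₂ one has N(τ₁)·D(τ₂) ≤ N(τ₂)·D(τ₁). This is the cross-multiplied (derivative-free) form of the statement that the average waiting time w̄(λ) = N(λ/μ)/(μ·D(λ/μ)) of the M/M/s/K queue is nondecreasing in λ. -/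
/-- Cross-multiplied (derivative-free) form of the monotonicity of the average
waiting time of the `M/M/s/K` queue: `N(τ₁)·D(τ₂) ≤ N(τ₂)·D(τ₁)` for
`0 ≤ τ₁ ≤ τ₂`. -/
theorem mmsk_waiting_time_monotone_cross_multiplied
    (s K : ℕ) (hs : 0 < s) (hsK : s ≤ K)
    (a : ℕ → ℝ)
    (ha1 : ∀ n, n < s → a n = 1 / (n.factorial : ℝ))
    (ha2 : ∀ n, s ≤ n → n ≤ K → a n = 1 / ((s : ℝ) ^ (n - s) * (s.factorial : ℝ)))
    (τ₁ τ₂ : ℝ) (hτ₁ : 0 ≤ τ₁) (hτ : τ₁ ≤ τ₂) :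
    (∑ n ∈ Finset.Icc 1 K, (n : ℝ) * a n * τ₁ ^ (n - 1)) *
        (∑ m ∈ Finset.range K, a m * τ₂ ^ m) ≤
      (∑ n ∈ Finset.Icc 1 K, (n : ℝ) * a n * τ₂ ^ (n - 1)) *
        (∑ m ∈ Finset.range K, a m * τ₁ ^ m) := by
  have hτ₂ : (0:ℝ) ≤ τ₂ := le_trans hτ₁ hτ
  have hs' : (0:ℝ) < s := by exact_mod_cast hs
  -- positivity of the coefficients
  have apos : ∀ n, n ≤ K → 0 < a n := by
    intro n hn
    rcases lt_or_ge n s with h | h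
    · rw [ha1 n h]; positivity
    · rw [ha2 n h hn]; positivity
  -- the ratio function
  set c : ℕ → ℝ := fun n => max 1 (((n:ℝ)+1)/s) with hc
  set b : ℕ → ℝ := fun p => ((p:ℝ)+1) * a (p+1) with hbdef
  have hb : ∀ n, n + 1 ≤ K → b n = c n * a n := by
    intro n hn
    rcases lt_or_ge (n+1) s with h | h
    · -- n+1 < s
      have hn' : n < s := Nat.lt_of_succ_lt h
      have hmax : c n = 1 := by
        simp only [hc, max_eq_left_iff]
        rw [div_le_one hs']
        have h1 : ((n:ℝ)+1) = ((n+1 : ℕ) : ℝ) := by push_cast; ring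
        rw [h1]
        exact_mod_cast h.le
      simp only [hbdef, hmax, one_mul]
      rw [ha1 _ h, ha1 _ hn', Nat.factorial_succ]
      have h1 : (0:ℝ) < (n.factorial : ℝ) := by positivity
      push_cast
      field_simp
    · -- s ≤ n + 1
      rcases lt_or_ge n s with h2 | h2
      · -- n + 1 = s
        have hns : n + 1 = s := le_antisymm h2 h
        have hmax : c n = 1 := by
          simp only [hc, max_eq_left_iff]
          have h3 : ((n:ℝ)+1) = (s:ℝ) := by exact_mod_cast congrArg Nat.cast hns
          rw [h3, div_self hs'.ne']
        simp only [hbdef, hmax, one_mul]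
        rw [ha2 _ h hn, ha1 _ h2]
        have hsub : n + 1 - s = 0 := by omega
        rw [hsub, pow_zero, one_mul]
        have hfac : (s.factorial : ℝ) = s * n.factorial := by
          rw [← hns, Nat.factorial_succ]; push_cast; ring
        rw [hfac]
        have h1 : (0:ℝ) < (n.factorial : ℝ) := by positivity
        have hns' : ((n:ℝ)+1) = (s:ℝ) := by exact_mod_cast congrArg Nat.cast hns
        rw [hns']
        field_simp
      · -- s ≤ n
        have hmax : c n = ((n:ℝ)+1)/s := by
          simp only [hc, max_eq_right_iff]
          rw [le_div_iff₀ hs', one_mul]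
          have h3 : (s:ℝ) ≤ (n:ℝ) := by exact_mod_cast h2
          linarith
        simp only [hbdef, hmax]
        rw [ha2 _ h hn, ha2 _ h2 (by omega)]
        have hsub : n + 1 - s = (n - s) + 1 := by omega
        rw [hsub, pow_succ]
        rw [mul_one_div, div_mul_div_comm, mul_one]
        congr 1
        ring
  -- monotonicity of c
  have hcmono : ∀ p m : ℕ, p ≤ m → c p ≤ c m := by
    intro p m hpm
    apply max_le_max le_rfl
    have hp' : (p:ℝ) ≤ (m:ℝ) := by exact_mod_cast hpm
    gcongr
  -- rewrite N(τ) as a sum over range K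
  have hre : ∀ τ : ℝ, (∑ n ∈ Finset.Icc 1 K, (n : ℝ) * a n * τ ^ (n - 1)) =
      ∑ p ∈ Finset.range K, b p * τ ^ p := by
    intro τ
    rw [← Finset.Ico_add_one_right_eq_Icc, Finset.sum_Ico_eq_sum_range]
    show _ = ∑ p ∈ Finset.range (K + 1 - 1), b p * τ ^ p
    apply Finset.sum_congr rfl
    intro i _
    have h1 : 1 + i - 1 = i := by omega
    rw [h1, Nat.add_comm 1 i]
    simp only [hbdef]
    push_cast
    ring
  -- the key pointwise inequality
  have key : ∀ p m : ℕ, p ≤ m → m < K →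
      0 ≤ (b p * a m - b m * a p) * (τ₂ ^ p * τ₁ ^ m - τ₁ ^ p * τ₂ ^ m) := by
    intro p m hpm hm
    have hpK : p + 1 ≤ K := by omega
    have hmK : m + 1 ≤ K := by omega
    have hap : 0 < a p := apos p (by omega)
    have ham : 0 < a m := apos m (by omega)
    have hfac1 : b p * a m - b m * a p ≤ 0 := by
      rw [hb p hpK, hb m hmK]
      have hcc := hcmono p m hpm
      nlinarith [mul_le_mul_of_nonneg_right hcc (mul_pos hap ham).le]
    have hfac2 : τ₂ ^ p * τ₁ ^ m - τ₁ ^ p * τ₂ ^ m ≤ 0 := by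
      obtain ⟨d, rfl⟩ : ∃ d, m = p + d := ⟨m - p, by omega⟩
      rw [pow_add, pow_add]
      have hd : τ₁ ^ d ≤ τ₂ ^ d := pow_le_pow_left₀ hτ₁ hτ d
      have h1 : (0:ℝ) ≤ τ₁ ^ p * τ₂ ^ p := by positivity
      nlinarith
    have hmm := mul_nonneg (neg_nonneg.2 hfac1) (neg_nonneg.2 hfac2)
    rw [neg_mul_neg] at hmm
    exact hmm
  have key' : ∀ p m : ℕ, p < K → m < K →
      0 ≤ (b p * a m - b m * a p) * (τ₂ ^ p * τ₁ ^ m - τ₁ ^ p * τ₂ ^ m) := by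
    intro p m hp hm
    rcases le_total p m with h | h
    · exact key p m h hm
    · have h0 := key m p h hp
      have e : (b p * a m - b m * a p) * (τ₂ ^ p * τ₁ ^ m - τ₁ ^ p * τ₂ ^ m)
          = (b m * a p - b p * a m) * (τ₂ ^ m * τ₁ ^ p - τ₁ ^ m * τ₂ ^ p) := by ring
      rw [e]; exact h0
  -- symmetrization
  set F : ℕ → ℕ → ℝ := fun p m =>
    b p * τ₂ ^ p * (a m * τ₁ ^ m) - b p * τ₁ ^ p * (a m * τ₂ ^ m) with hF
  have hgoal : (0:ℝ) ≤ ∑ p ∈ Finset.range K, ∑ m ∈ Finset.range K, F p m := by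
    have hcomm : (∑ p ∈ Finset.range K, ∑ m ∈ Finset.range K, F p m)
        = ∑ p ∈ Finset.range K, ∑ m ∈ Finset.range K, F m p := Finset.sum_comm
    have hdouble : (∑ p ∈ Finset.range K, ∑ m ∈ Finset.range K, F p m) +
        (∑ p ∈ Finset.range K, ∑ m ∈ Finset.range K, F p m) =
        ∑ p ∈ Finset.range K, ∑ m ∈ Finset.range K, (F p m + F m p) := by
      nth_rewrite 2 [hcomm]
      rw [← Finset.sum_add_distrib]
      apply Finset.sum_congr rfl
      intro p _
      rw [← Finset.sum_add_distrib]
    have hnn : 0 ≤ ∑ p ∈ Finset.range K, ∑ m ∈ Finset.range K, (F p m + F m p) := by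
      apply Finset.sum_nonneg
      intro p hp
      apply Finset.sum_nonneg
      intro m hm
      have hp' := Finset.mem_range.mp hp
      have hm' := Finset.mem_range.mp hm
      have e : F p m + F m p =
          (b p * a m - b m * a p) * (τ₂ ^ p * τ₁ ^ m - τ₁ ^ p * τ₂ ^ m) := by
        simp only [hF]; ring
      rw [e]
      exact key' p m hp' hm'
    linarith [hdouble ▸ hnn]
  rw [hre τ₁, hre τ₂, Finset.sum_mul_sum, Finset.sum_mul_sum, ← sub_nonneg,
    ← Finset.sum_sub_distrib]
  have hinner : ∀ p ∈ Finset.range K,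
      (∑ m ∈ Finset.range K, b p * τ₂ ^ p * (a m * τ₁ ^ m)) -
        (∑ m ∈ Finset.range K, b p * τ₁ ^ p * (a m * τ₂ ^ m)) =
      ∑ m ∈ Finset.range K, F p m := by
    intro p _
    rw [← Finset.sum_sub_distrib]
  rw [Finset.sum_congr rfl hinner]
  exact hgoal
end

section
/- Fix positive integers s and K with s ≤ K, and define coefficients a_n = 1/n! for 0 ≤ n < s and a_n = 1/(s^{n−s}·s!) for s ≤ n ≤ K. Define E_{sK}(τ) = (Σ_{n=2}^{K} n·(n−1)·a_n·τ^{n−2})·(Σ_{n=0}^{K−1} a_n·τ^n) − (Σ_{n=1}^{K} n·a_n·τ^{n−1})·(Σ_{n=1}^{K−1} n·a_n·τ^{n−1}). Then E_{sK}(τ) ≥ 0 for every real number τ ≥ 0. -/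
/-- Nonnegativity of `E_{sK}(τ)`, the numerator of the derivative of the
average waiting time of the `M/M/s/K` queue. -/
theorem E_sK_nonneg
    (s K : ℕ) (hs : 0 < s) (hsK : s ≤ K)
    (a : ℕ → ℝ)
    (ha1 : ∀ n, n < s → a n = 1 / (n.factorial : ℝ))
    (ha2 : ∀ n, s ≤ n → n ≤ K → a n = 1 / ((s : ℝ) ^ (n - s) * (s.factorial : ℝ))) :
    ∀ τ : ℝ, 0 ≤ τ →
      0 ≤ (∑ n ∈ Finset.Icc 2 K, (n : ℝ) * ((n : ℝ) - 1) * a n * τ ^ (n - 2)) *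
            (∑ n ∈ Finset.range K, a n * τ ^ n) -
          (∑ n ∈ Finset.Icc 1 K, (n : ℝ) * a n * τ ^ (n - 1)) *
            (∑ n ∈ Finset.Icc 1 (K - 1), (n : ℝ) * a n * τ ^ (n - 1)) := by
  intro τ hτ
  have hK : 1 ≤ K := le_trans hs hsK
  set B : ℕ → ℝ := fun n => if s ≤ n then ((n:ℝ) + 1 - (s:ℝ)) * a (n+1) else 0 with hB
  have hapos : ∀ n, n ≤ K → 0 < a n := by
    intro n hn
    rcases lt_or_ge n s with h | h
    · rw [ha1 n h]; positivity
    · rw [ha2 n h hn]; positivity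
  have hL3 : ∀ m, s ≤ m → m < K → a (m+1) = a m / s := by
    intro m hm hmK
    rw [ha2 m hm (le_of_lt hmK), ha2 (m+1) (by omega) (by omega),
      show m + 1 - s = (m - s) + 1 by omega, pow_succ]
    have h1 : (s:ℝ) ≠ 0 := Nat.cast_ne_zero.2 (by omega)
    have h2 : ((s:ℝ))^(m-s) ≠ 0 := pow_ne_zero _ h1
    have h3 : (s.factorial : ℝ) ≠ 0 := Nat.cast_ne_zero.2 s.factorial_ne_zero
    field_simp
  have hL1 : ∀ n, n < K → ((n:ℝ)+1) * a (n+1) = a n + B n := by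
    intro n hn
    rcases lt_or_ge n s with h | h
    · have hBn : B n = 0 := if_neg (by omega)
      rw [hBn, add_zero]
      rcases lt_or_ge (n+1) s with h2 | h2
      · rw [ha1 n h, ha1 (n+1) h2, Nat.factorial_succ]
        have : (n.factorial : ℝ) ≠ 0 := Nat.cast_ne_zero.2 n.factorial_ne_zero
        push_cast
        field_simp
      · have hns : s = n + 1 := by omega
        rw [ha1 n h, ha2 (n+1) h2 (by omega), show n + 1 - s = 0 by omega, pow_zero,
          one_mul, hns, Nat.factorial_succ]
        have : (n.factorial : ℝ) ≠ 0 := Nat.cast_ne_zero.2 n.factorial_ne_zero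
        push_cast
        field_simp
    · have hBn : B n = ((n:ℝ) + 1 - (s:ℝ)) * a (n+1) := if_pos h
      rw [hBn, hL3 n h hn]
      have h1 : (s:ℝ) ≠ 0 := Nat.cast_ne_zero.2 (by omega)
      have hsn : (s:ℝ) ≤ (n:ℝ) := Nat.cast_le.2 h
      field_simp
      ring
  have hBnn : ∀ n, n < K → 0 ≤ B n := by
    intro n hn
    rcases lt_or_ge n s with h | h
    · simp [hB, if_neg (by omega : ¬ s ≤ n)]
    · have hBn : B n = ((n:ℝ) + 1 - (s:ℝ)) * a (n+1) := if_pos h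
      rw [hBn]
      have : (0:ℝ) ≤ (n:ℝ) + 1 - s := by
        have : (s:ℝ) ≤ (n:ℝ) := Nat.cast_le.2 h
        linarith
      exact mul_nonneg this (le_of_lt (hapos (n+1) (by omega)))
  -- sums
  set g : ℝ := ∑ n ∈ Finset.range K, a n * τ ^ n with hg
  set g₁ : ℝ := ∑ n ∈ Finset.range K, (n:ℝ) * a n * τ ^ (n-1) with hg₁
  set R : ℝ := ∑ n ∈ Finset.range K, B n * τ ^ n with hR
  set R₁ : ℝ := ∑ n ∈ Finset.range K, (n:ℝ) * B n * τ ^ (n-1) with hR₁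
  -- first derivative identity
  have hS1 : (∑ n ∈ Finset.Icc 1 K, (n : ℝ) * a n * τ ^ (n - 1)) = g + R := by
    rw [← Finset.Ico_add_one_right_eq_Icc, Finset.sum_Ico_eq_sum_range]
    simp only [show K + 1 - 1 = K from rfl]
    rw [hg, hR, ← Finset.sum_add_distrib]
    refine Finset.sum_congr rfl fun i hi => ?_
    have hiK : i < K := Finset.mem_range.1 hi
    have := hL1 i hiK
    have he : 1 + i - 1 = i := by omega
    rw [he]
    push_cast
    calc ((1:ℝ) + i) * a (1 + i) * τ ^ i = (((i:ℝ)+1) * a (i+1)) * τ ^ i := by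
          rw [add_comm 1 i]; ring
      _ = (a i + B i) * τ ^ i := by rw [this]
      _ = a i * τ ^ i + B i * τ ^ i := by ring
  -- second derivative identity
  have hS4 : (∑ n ∈ Finset.Icc 1 (K - 1), (n : ℝ) * a n * τ ^ (n - 1)) = g₁ := by
    rw [← Finset.Ico_add_one_right_eq_Icc, Finset.sum_Ico_eq_sum_range, hg₁]
    rw [show Finset.range K = Finset.range ((K-1)+1) by congr 1; omega,
      Finset.sum_range_succ']
    simp only [Nat.cast_zero, zero_mul, add_zero,
      show K - 1 + 1 - 1 = K - 1 from by omega]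
    refine Finset.sum_congr rfl fun i hi => ?_
    rw [show 1 + i - 1 = i by omega, show i + 1 - 1 = i from rfl]
    push_cast
    ring_nf
  have hS2 : (∑ n ∈ Finset.Icc 2 K, (n : ℝ) * ((n : ℝ) - 1) * a n * τ ^ (n - 2)) = g₁ + R₁ := by
    rw [← Finset.Ico_add_one_right_eq_Icc, Finset.sum_Ico_eq_sum_range,
      show K + 1 - 2 = K - 1 by omega]
    have hg₁' : g₁ = ∑ i ∈ Finset.range (K-1), ((i:ℝ)+1) * a (i+1) * τ ^ i := by
      rw [hg₁, show Finset.range K = Finset.range ((K-1)+1) by congr 1; omega,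
        Finset.sum_range_succ']
      simp only [Nat.cast_zero, zero_mul, add_zero]
      refine Finset.sum_congr rfl fun i hi => ?_
      rw [show i + 1 - 1 = i from rfl]
      push_cast
      ring
    have hR₁' : R₁ = ∑ i ∈ Finset.range (K-1), ((i:ℝ)+1) * B (i+1) * τ ^ i := by
      rw [hR₁, show Finset.range K = Finset.range ((K-1)+1) by congr 1; omega,
        Finset.sum_range_succ']
      simp only [Nat.cast_zero, zero_mul, add_zero]
      refine Finset.sum_congr rfl fun i hi => ?_
      rw [show i + 1 - 1 = i from rfl]
      push_cast
      ring
    rw [hg₁', hR₁', ← Finset.sum_add_distrib]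
    refine Finset.sum_congr rfl fun i hi => ?_
    have hiK : i + 1 < K := by have := Finset.mem_range.1 hi; omega
    have key := hL1 (i+1) hiK
    rw [show 2 + i - 2 = i by omega]
    push_cast
    calc ((2:ℝ) + i) * ((2:ℝ) + i - 1) * a (2 + i) * τ ^ i
        = (((i:ℝ)+1)+1) * a ((i+1)+1) * (((i:ℝ)+1) * τ ^ i) := by
          rw [show 2 + i = (i+1)+1 by omega]; push_cast; ring
      _ = (a (i+1) + B (i+1)) * (((i:ℝ)+1) * τ ^ i) := by rw [← key]; push_cast; ring
      _ = ((i:ℝ)+1) * a (i+1) * τ ^ i + ((i:ℝ)+1) * B (i+1) * τ ^ i := by ring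
  rw [hS1, hS2, hS4]
  have hred : (g₁ + R₁) * g - (g + R) * g₁ = R₁ * g - R * g₁ := by ring
  rw [hred]
  -- expand into double sum
  set F : ℕ → ℕ → ℝ := fun m n =>
    ((m:ℝ) * B m * τ ^ (m-1)) * (a n * τ ^ n) - (B m * τ ^ m) * ((n:ℝ) * a n * τ ^ (n-1))
    with hF
  have hexp : R₁ * g - R * g₁ = ∑ m ∈ Finset.range K, ∑ n ∈ Finset.range K, F m n := by
    rw [hR₁, hg, hR, hg₁, Finset.sum_mul_sum, Finset.sum_mul_sum, ← Finset.sum_sub_distrib]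
    exact Finset.sum_congr rfl fun m _ => by rw [← Finset.sum_sub_distrib]
  rw [hexp]
  -- pairwise nonnegativity
  have hpairG : ∀ m n, m < K → n < K → n ≤ m → 0 ≤ F m n + F n m := by
    intro m n hm hn hnm
    rcases lt_or_ge m s with hms | hms
    · have h1 : B m = 0 := if_neg (by omega)
      have h2 : B n = 0 := if_neg (by omega)
      simp [hF, h1, h2]
    · have hBm : B m = ((m:ℝ) + 1 - (s:ℝ)) * a (m+1) := if_pos hms
      rcases lt_or_ge n s with hns | hns
      · -- B n = 0
        have h2 : B n = 0 := if_neg (by omega)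
        have hFnm : F n m = 0 := by simp [hF, h2]
        rw [hFnm, add_zero]
        rcases Nat.eq_zero_or_pos n with rfl | hn1
        · simp only [hF, Nat.cast_zero, zero_mul, mul_zero, sub_zero, pow_zero, mul_one]
          have : (0:ℝ) ≤ (m:ℝ) := Nat.cast_nonneg m
          have := hBnn m hm
          have := hapos 0 (by omega)
          positivity
        · obtain ⟨m', rfl⟩ : ∃ m', m = m' + 1 := ⟨m - 1, by omega⟩
          obtain ⟨n', rfl⟩ : ∃ n', n = n' + 1 := ⟨n - 1, by omega⟩
          have hFeq : F (m'+1) (n'+1)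
              = B (m'+1) * a (n'+1) * (((m'+1:ℕ):ℝ) - ((n'+1:ℕ):ℝ)) * τ ^ (m' + n' + 1) := by
            simp only [hF, Nat.add_sub_cancel]
            push_cast
            ring
          rw [hFeq]
          have h3 : (0:ℝ) ≤ ((m'+1:ℕ):ℝ) - ((n'+1:ℕ):ℝ) := by
            have : ((n'+1:ℕ):ℝ) ≤ ((m'+1:ℕ):ℝ) := Nat.cast_le.2 hnm
            linarith
          have := hBnn (m'+1) hm
          have := hapos (n'+1) (by omega)
          positivity
      · -- both ≥ s
        have hBn : B n = ((n:ℝ) + 1 - (s:ℝ)) * a (n+1) := if_pos hns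
        have ham : a (m+1) = a m / s := hL3 m hms hm
        have han : a (n+1) = a n / s := hL3 n hns hn
        obtain ⟨m', rfl⟩ : ∃ m', m = m' + 1 := ⟨m - 1, by omega⟩
        obtain ⟨n', rfl⟩ : ∃ n', n = n' + 1 := ⟨n - 1, by omega⟩
        have hs0 : (s:ℝ) ≠ 0 := Nat.cast_ne_zero.2 (by omega)
        have hFeq : F (m'+1) (n'+1) + F (n'+1) (m'+1)
            = (((m'+1:ℕ):ℝ) - ((n'+1:ℕ):ℝ))^2 * a (m'+1) * a (n'+1) / s
              * τ ^ (m' + n' + 1) := by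
          simp only [hF, Nat.add_sub_cancel, hBm, hBn, ham, han]
          field_simp
          push_cast
          ring
        rw [hFeq]
        have := hapos (m'+1) (by omega)
        have := hapos (n'+1) (by omega)
        positivity
  have hpair : ∀ m n, m < K → n < K → 0 ≤ F m n + F n m := by
    intro m n hm hn
    rcases le_total n m with h | h
    · exact hpairG m n hm hn h
    · have := hpairG n m hn hm h
      linarith
  have hdouble : 0 ≤ ∑ m ∈ Finset.range K, ∑ n ∈ Finset.range K, (F m n + F n m) :=
    Finset.sum_nonneg fun m hm => Finset.sum_nonneg fun n hn =>
      hpair m n (Finset.mem_range.1 hm) (Finset.mem_range.1 hn)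
  have hsym : ∑ m ∈ Finset.range K, ∑ n ∈ Finset.range K, (F m n + F n m)
      = 2 * ∑ m ∈ Finset.range K, ∑ n ∈ Finset.range K, F m n := by
    rw [two_mul]
    simp only [Finset.sum_add_distrib]
    congr 1
    exact Finset.sum_comm
  rw [hsym] at hdouble
  linarith
end

section
/- Fix positive integers s and K with K ≥ s + 1, and define coefficients a_n = 1/n! for 0 ≤ n < s and a_n = 1/(s^{n−s}·s!) for s ≤ n ≤ K. For positive integers s ≤ K' define E_{sK'}(τ) = (Σ_{n=2}^{K'} n(n−1)·a_n·τ^{n−2})·(Σ_{n=0}^{K'−1} a_n·τ^n) − (Σ_{n=1}^{K'} n·a_n·τ^{n−1})·(Σ_{n=1}^{K'−1} n·a_n·τ^{n−1}), and define h_{sK}(τ) = K(K−1)·(Σ_{n=0}^{s−1} τ^n/n! + Σ_{n=s}^{K−2} τ^n/(s!·s^{n−s})) + s·τ·(Σ_{n=0}^{s−3} τ^n/n! + Σ_{n=s}^{K−1} n(n−1)·τ^{n−2}/(s!·s^{n−s})) − K·τ·(Σ_{n=0}^{s−2} τ^n/n! + Σ_{n=s}^{K−2} n·τ^{n−1}/(s!·s^{n−s}))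 − (K−1)·s·(Σ_{n=0}^{s−2} τ^n/n! + Σ_{n=s}^{K−1} n·τ^{n−1}/(s!·s^{n−s})). Then for every real τ, E_{sK}(τ) − E_{s,K−1}(τ) = (τ^{K−2}/(s!·s^{K−s}))·h_{sK}(τ). -/
/-- Inductive-step decomposition: `E_{sK}(τ) − E_{s,K−1}(τ)
    = (τ^{K−2}/(s!·s^{K−s}))·h_{sK}(τ)`. -/
theorem E_sK_sub_E_sKm1_eq
    (s K : ℕ) (hs : 0 < s) (hK : s + 1 ≤ K)
    (a : ℕ → ℝ)
    (ha1 : ∀ n, n < s → a n = 1 / (n.factorial : ℝ))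
    (ha2 : ∀ n, s ≤ n → n ≤ K → a n = 1 / ((s : ℝ) ^ (n - s) * (s.factorial : ℝ)))
    (E : ℕ → ℝ → ℝ)
    (hE : ∀ K', s ≤ K' → K' ≤ K → ∀ τ : ℝ,
      E K' τ =
        (∑ n ∈ Finset.Icc 2 K', (n : ℝ) * ((n : ℝ) - 1) * a n * τ ^ (n - 2)) *
            (∑ n ∈ Finset.range K', a n * τ ^ n) -
          (∑ n ∈ Finset.Icc 1 K', (n : ℝ) * a n * τ ^ (n - 1)) *
            (∑ n ∈ Finset.Icc 1 (K' - 1), (n : ℝ) * a n * τ ^ (n - 1)))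
    (h : ℝ → ℝ)
    (hh : ∀ τ : ℝ,
      h τ =
        (K : ℝ) * ((K : ℝ) - 1) *
            ((∑ n ∈ Finset.range s, τ ^ n / (n.factorial : ℝ)) +
              ∑ n ∈ Finset.Icc s (K - 2),
                τ ^ n / ((s.factorial : ℝ) * (s : ℝ) ^ (n - s)))
          + (s : ℝ) * τ *
            ((∑ n ∈ Finset.range (s - 2), τ ^ n / (n.factorial : ℝ)) +
              ∑ n ∈ Finset.Icc s (K - 1),
                (n : ℝ) * ((n : ℝ) - 1) * τ ^ (n - 2) /
                  ((s.factorial : ℝ) * (s : ℝ) ^ (n - s)))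
          - (K : ℝ) * τ *
            ((∑ n ∈ Finset.range (s - 1), τ ^ n / (n.factorial : ℝ)) +
              ∑ n ∈ Finset.Icc s (K - 2),
                (n : ℝ) * τ ^ (n - 1) / ((s.factorial : ℝ) * (s : ℝ) ^ (n - s)))
          - ((K : ℝ) - 1) * (s : ℝ) *
            ((∑ n ∈ Finset.range (s - 1), τ ^ n / (n.factorial : ℝ)) +
              ∑ n ∈ Finset.Icc s (K - 1),
                (n : ℝ) * τ ^ (n - 1) / ((s.factorial : ℝ) * (s : ℝ) ^ (n - s)))) :
    ∀ τ : ℝ,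
      E K τ - E (K - 1) τ =
        τ ^ (K - 2) / ((s.factorial : ℝ) * (s : ℝ) ^ (K - s)) * h τ := by
  intro τ
  obtain ⟨m, rfl⟩ : ∃ m, K = m + 1 + 1 := ⟨K - 2, by omega⟩
  have hsm : s ≤ m + 1 := by omega
  have hF : (s.factorial : ℝ) ≠ 0 := Nat.cast_ne_zero.mpr s.factorial_ne_zero
  have hsR : (s : ℝ) ≠ 0 := Nat.cast_ne_zero.mpr hs.ne'
  have hP : (s : ℝ) ^ (m + 1 - s) ≠ 0 := pow_ne_zero _ hsR
  have haK : a (m + 1 + 1) = 1 / ((s : ℝ) ^ (m + 1 + 1 - s) * (s.factorial : ℝ)) :=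
    ha2 _ (by omega) le_rfl
  have haK1 : a (m + 1) = 1 / ((s : ℝ) ^ (m + 1 - s) * (s.factorial : ℝ)) :=
    ha2 _ hsm (by omega)
  have hpow : (s : ℝ) ^ (m + 1 + 1 - s) = (s : ℝ) * (s : ℝ) ^ (m + 1 - s) := by
    rw [show m + 1 + 1 - s = (m + 1 - s) + 1 by omega, pow_succ]; ring
  -- sum-splitting helpers
  have splitI1 : ∀ f : ℕ → ℝ, ∑ n ∈ Finset.Icc 1 (m + 1), f n
      = (∑ n ∈ Finset.Ico 1 s, f n) + ∑ n ∈ Finset.Icc s (m + 1), f n := by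
    intro f
    rw [← Finset.Ico_add_one_right_eq_Icc 1 (m + 1), ← Finset.Ico_add_one_right_eq_Icc s (m + 1),
      ← Finset.sum_Ico_consecutive f (by omega : 1 ≤ s) (by omega : s ≤ m + 1 + 1)]
  have splitIm : ∀ f : ℕ → ℝ, ∑ n ∈ Finset.Icc 1 m, f n
      = (∑ n ∈ Finset.Ico 1 s, f n) + ∑ n ∈ Finset.Icc s m, f n := by
    intro f
    rw [← Finset.Ico_add_one_right_eq_Icc 1 m, ← Finset.Ico_add_one_right_eq_Icc s m,
      ← Finset.sum_Ico_consecutive f (by omega : 1 ≤ s) (hsm : s ≤ m + 1)]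
  have hIc : Finset.Ico s (m + 1) = Finset.Icc s m := by
    ext x; simp only [Finset.mem_Ico, Finset.mem_Icc]; omega
  have splitR : ∀ f : ℕ → ℝ, ∑ n ∈ Finset.range (m + 1), f n
      = (∑ n ∈ Finset.range s, f n) + ∑ n ∈ Finset.Icc s m, f n := by
    intro f
    rw [← hIc, Finset.sum_range_add_sum_Ico f hsm]
  -- factorial-sum reindexings
  have lemIcoC : ∑ n ∈ Finset.Ico 1 s, (n : ℝ) * (1 / (n.factorial : ℝ)) * τ ^ (n - 1)
      = ∑ n ∈ Finset.range (s - 1), τ ^ n / (n.factorial : ℝ) := by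
    rw [Finset.sum_Ico_eq_sum_range]
    refine Finset.sum_congr rfl fun i _ => ?_
    have h1 : (i.factorial : ℝ) ≠ 0 := Nat.cast_ne_zero.mpr i.factorial_ne_zero
    have h2 : (i : ℝ) + 1 ≠ 0 := by positivity
    rw [add_comm 1 i, Nat.add_sub_cancel, Nat.factorial_succ]
    push_cast
    field_simp
  have lemIcoA : ∑ n ∈ Finset.Ico 1 s,
        (n : ℝ) * ((n : ℝ) - 1) * (1 / (n.factorial : ℝ)) * τ ^ (n - 2)
      = ∑ n ∈ Finset.range (s - 2), τ ^ n / (n.factorial : ℝ) := by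
    rcases Nat.lt_or_ge s 2 with h2 | h2
    · have hs1 : s = 1 := by omega
      subst hs1
      simp
    · have hsp : Finset.Ico 1 s = Finset.Ico 1 2 ∪ Finset.Ico 2 s :=
        (Finset.Ico_union_Ico_eq_Ico (by norm_num) h2).symm
      rw [hsp, Finset.sum_union (Finset.Ico_disjoint_Ico_consecutive 1 2 s)]
      have e0 : ∑ n ∈ Finset.Ico (1:ℕ) 2,
          (n : ℝ) * ((n : ℝ) - 1) * (1 / (n.factorial : ℝ)) * τ ^ (n - 2) = 0 := by
        rw [Finset.sum_Ico_eq_sum_range]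
        norm_num
      rw [e0, zero_add, Finset.sum_Ico_eq_sum_range]
      refine Finset.sum_congr rfl fun i _ => ?_
      have h1 : (i.factorial : ℝ) ≠ 0 := Nat.cast_ne_zero.mpr i.factorial_ne_zero
      have h3 : (i : ℝ) + 1 ≠ 0 := by positivity
      have h4 : (i : ℝ) + 2 ≠ 0 := by positivity
      rw [add_comm 2 i, Nat.add_sub_cancel, show i + 2 = (i + 1) + 1 from rfl,
        Nat.factorial_succ, Nat.factorial_succ]
      push_cast
      field_simp
      ring
  -- drop the (zero) n = 1 term in the second-derivative sum
  have hdrop : ∑ n ∈ Finset.Icc 1 (m + 1), (n : ℝ) * ((n : ℝ) - 1) * a n * τ ^ (n - 2)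
      = ∑ n ∈ Finset.Icc 2 (m + 1), (n : ℝ) * ((n : ℝ) - 1) * a n * τ ^ (n - 2) := by
    have hins : Finset.Icc 1 (m + 1) = insert 1 (Finset.Icc 2 (m + 1)) := by
      ext x; simp only [Finset.mem_Icc, Finset.mem_insert]; omega
    rw [hins, Finset.sum_insert (by simp)]
    norm_num
  -- conversions of the (m+1)-truncated sums
  have eA' : ∑ n ∈ Finset.Icc 2 (m + 1), (n : ℝ) * ((n : ℝ) - 1) * a n * τ ^ (n - 2)
      = (∑ n ∈ Finset.range (s - 2), τ ^ n / (n.factorial : ℝ))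
        + ∑ n ∈ Finset.Icc s (m + 1),
            (n : ℝ) * ((n : ℝ) - 1) * τ ^ (n - 2) /
              ((s.factorial : ℝ) * (s : ℝ) ^ (n - s)) := by
    rw [← hdrop, splitI1]
    congr 1
    · rw [← lemIcoA]
      refine Finset.sum_congr rfl fun n hn => ?_
      rw [ha1 n (Finset.mem_Ico.mp hn).2]
    · refine Finset.sum_congr rfl fun n hn => ?_
      obtain ⟨h1n, h2n⟩ := Finset.mem_Icc.mp hn
      rw [ha2 n h1n (by omega)]
      ring
  have eB' : ∑ n ∈ Finset.range (m + 1), a n * τ ^ n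
      = (∑ n ∈ Finset.range s, τ ^ n / (n.factorial : ℝ))
        + ∑ n ∈ Finset.Icc s m, τ ^ n / ((s.factorial : ℝ) * (s : ℝ) ^ (n - s)) := by
    rw [splitR]
    congr 1
    · refine Finset.sum_congr rfl fun n hn => ?_
      rw [ha1 n (Finset.mem_range.mp hn)]
      ring
    · refine Finset.sum_congr rfl fun n hn => ?_
      obtain ⟨h1n, h2n⟩ := Finset.mem_Icc.mp hn
      rw [ha2 n h1n (by omega)]
      ring
  have eC' : ∑ n ∈ Finset.Icc 1 (m + 1), (n : ℝ) * a n * τ ^ (n - 1)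
      = (∑ n ∈ Finset.range (s - 1), τ ^ n / (n.factorial : ℝ))
        + ∑ n ∈ Finset.Icc s (m + 1),
            (n : ℝ) * τ ^ (n - 1) / ((s.factorial : ℝ) * (s : ℝ) ^ (n - s)) := by
    rw [splitI1]
    congr 1
    · rw [← lemIcoC]
      refine Finset.sum_congr rfl fun n hn => ?_
      rw [ha1 n (Finset.mem_Ico.mp hn).2]
    · refine Finset.sum_congr rfl fun n hn => ?_
      obtain ⟨h1n, h2n⟩ := Finset.mem_Icc.mp hn
      rw [ha2 n h1n (by omega)]
      ring
  have eD : ∑ n ∈ Finset.Icc 1 m, (n : ℝ) * a n * τ ^ (n - 1)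
      = (∑ n ∈ Finset.range (s - 1), τ ^ n / (n.factorial : ℝ))
        + ∑ n ∈ Finset.Icc s m,
            (n : ℝ) * τ ^ (n - 1) / ((s.factorial : ℝ) * (s : ℝ) ^ (n - s)) := by
    rw [splitIm]
    congr 1
    · rw [← lemIcoC]
      refine Finset.sum_congr rfl fun n hn => ?_
      rw [ha1 n (Finset.mem_Ico.mp hn).2]
    · refine Finset.sum_congr rfl fun n hn => ?_
      obtain ⟨h1n, h2n⟩ := Finset.mem_Icc.mp hn
      rw [ha2 n h1n (by omega)]
      ring
  -- full sums with the top term split off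
  have eA : ∑ n ∈ Finset.Icc 2 (m + 1 + 1), (n : ℝ) * ((n : ℝ) - 1) * a n * τ ^ (n - 2)
      = (∑ n ∈ Finset.range (s - 2), τ ^ n / (n.factorial : ℝ))
        + (∑ n ∈ Finset.Icc s (m + 1),
            (n : ℝ) * ((n : ℝ) - 1) * τ ^ (n - 2) /
              ((s.factorial : ℝ) * (s : ℝ) ^ (n - s)))
        + ((m : ℝ) + 2) * ((m : ℝ) + 1) * τ ^ m /
            ((s.factorial : ℝ) * (s : ℝ) ^ (m + 1 - s) * (s : ℝ)) := by
    rw [Finset.sum_Icc_succ_top (show 2 ≤ m + 1 + 1 by omega), eA', haK, hpow]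
    simp only [show m + 1 + 1 - 2 = m from rfl]
    push_cast
    ring
  have eB : ∑ n ∈ Finset.range (m + 1 + 1), a n * τ ^ n
      = (∑ n ∈ Finset.range s, τ ^ n / (n.factorial : ℝ))
        + (∑ n ∈ Finset.Icc s m, τ ^ n / ((s.factorial : ℝ) * (s : ℝ) ^ (n - s)))
        + τ ^ (m + 1) / ((s.factorial : ℝ) * (s : ℝ) ^ (m + 1 - s)) := by
    rw [Finset.sum_range_succ, eB', haK1]
    ring
  have eC : ∑ n ∈ Finset.Icc 1 (m + 1 + 1), (n : ℝ) * a n * τ ^ (n - 1)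
      = (∑ n ∈ Finset.range (s - 1), τ ^ n / (n.factorial : ℝ))
        + (∑ n ∈ Finset.Icc s (m + 1),
            (n : ℝ) * τ ^ (n - 1) / ((s.factorial : ℝ) * (s : ℝ) ^ (n - s)))
        + ((m : ℝ) + 2) * τ ^ (m + 1) /
            ((s.factorial : ℝ) * (s : ℝ) ^ (m + 1 - s) * (s : ℝ)) := by
    rw [Finset.sum_Icc_succ_top (show 1 ≤ m + 1 + 1 by omega), eC', haK, hpow]
    simp only [show m + 1 + 1 - 1 = m + 1 from rfl]
    push_cast
    ring
  have hC2 : ∑ n ∈ Finset.Icc s (m + 1),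
        (n : ℝ) * τ ^ (n - 1) / ((s.factorial : ℝ) * (s : ℝ) ^ (n - s))
      = (∑ n ∈ Finset.Icc s m,
          (n : ℝ) * τ ^ (n - 1) / ((s.factorial : ℝ) * (s : ℝ) ^ (n - s)))
        + ((m : ℝ) + 1) * τ ^ m / ((s.factorial : ℝ) * (s : ℝ) ^ (m + 1 - s)) := by
    rw [Finset.sum_Icc_succ_top hsm]
    simp only [show m + 1 - 1 = m from rfl]
    push_cast
    ring
  have hEm := hE (m + 1) hsm (by omega) τ
  simp only [show m + 1 - 1 = m from rfl] at hEm
  rw [hE (m + 1 + 1) (by omega) le_rfl τ, hh τ,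
    show m + 1 + 1 - 1 = m + 1 from rfl, show m + 1 + 1 - 2 = m from rfl,
    hEm, eA, eB, eC, eA', eB', eC', eD, hC2, hpow]
  push_cast
  field_simp
  ring
end

section
/- Fix positive integers s and K with K ≥ s + 1, and define h_{sK}(τ) = K(K−1)·(Σ_{n=0}^{s−1} τ^n/n! + Σ_{n=s}^{K−2} τ^n/(s!·s^{n−s})) + s·τ·(Σ_{n=0}^{s−3} τ^n/n! + Σ_{n=s}^{K−1} n(n−1)·τ^{n−2}/(s!·s^{n−s})) − K·τ·(Σ_{n=0}^{s−2} τ^n/n! + Σ_{n=s}^{K−2} n·τ^{n−1}/(s!·s^{n−s})) − (K−1)·s·(Σ_{n=0}^{s−2} τ^n/n! + Σ_{n=s}^{K−1} n·τ^{n−1}/(s!·s^{n−s})). Then h_{sK}(τ) ≥ 0 for every real number τ ≥ 0. -/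
open Finset

noncomputable def bb (s n : ℕ) : ℝ :=
  if n < s then 1 / (n.factorial : ℝ) else 1 / ((s.factorial : ℝ) * (s : ℝ) ^ (n - s))

lemma bb_of_lt {s n : ℕ} (h : n < s) : bb s n = 1 / (n.factorial : ℝ) := if_pos h

lemma bb_of_ge {s n : ℕ} (h : s ≤ n) :
    bb s n = 1 / ((s.factorial : ℝ) * (s : ℝ) ^ (n - s)) := if_neg (not_lt.2 h)

lemma sum_split (s m : ℕ) (h : s ≤ m) (f : ℕ → ℝ) :
    ∑ n ∈ range m, f n = ∑ n ∈ range s, f n + ∑ n ∈ Ico s m, f n := by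
  simp only [range_eq_Ico]
  rw [← sum_Ico_consecutive f (Nat.zero_le s) h]

lemma inner1 (s K : ℕ) (hs : 0 < s) (hK : s + 1 ≤ K) (τ : ℝ) :
    (∑ n ∈ range s, τ ^ n / (n.factorial : ℝ)) +
      ∑ n ∈ Icc s (K - 2), τ ^ n / ((s.factorial : ℝ) * (s : ℝ) ^ (n - s))
    = ∑ n ∈ range (K - 1), bb s n * τ ^ n := by
  have h1 : Icc s (K-2) = Ico s (K-1) := by
    have e : K - 1 = K - 2 + 1 := by omega
    rw [e, Finset.Ico_add_one_right_eq_Icc]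
  rw [h1, sum_split s (K-1) (by omega)]
  congr 1
  · exact sum_congr rfl fun n hn => by rw [bb_of_lt (mem_range.mp hn)]; ring
  · exact sum_congr rfl fun n hn => by rw [bb_of_ge (mem_Ico.mp hn).1]; ring

lemma inner2 (s M : ℕ) (hs : 0 < s) (hM : s ≤ M + 1) (τ : ℝ) :
    (∑ n ∈ range (s - 1), τ ^ n / (n.factorial : ℝ)) +
      ∑ n ∈ Icc s M, (n : ℝ) * τ ^ (n - 1) / ((s.factorial : ℝ) * (s : ℝ) ^ (n - s))
    = ∑ n ∈ range (M + 1), (n : ℝ) * bb s n * τ ^ (n - 1) := by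
  have h1 : Icc s M = Ico s (M+1) := (Finset.Ico_add_one_right_eq_Icc s M).symm
  rw [h1, sum_split s (M+1) (by omega)]
  congr 1
  · have h2 := Finset.sum_range_succ' (fun n => (n:ℝ) * bb s n * τ ^ (n-1)) (s-1)
    rw [show s - 1 + 1 = s by omega] at h2
    rw [h2]
    simp only [Nat.cast_zero, zero_mul, add_zero]
    refine sum_congr rfl fun i hi => ?_
    have hi' : i + 1 < s := by have := mem_range.mp hi; omega
    rw [bb_of_lt hi', Nat.add_sub_cancel, Nat.factorial_succ]
    push_cast
    have h3 : (i.factorial : ℝ) ≠ 0 := by exact_mod_cast i.factorial_ne_zero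
    field_simp
  · exact sum_congr rfl fun n hn => by rw [bb_of_ge (mem_Ico.mp hn).1]; ring

lemma inner3 (s M : ℕ) (hs : 0 < s) (hM : s ≤ M + 1) (τ : ℝ) :
    (∑ n ∈ range (s - 2), τ ^ n / (n.factorial : ℝ)) +
      ∑ n ∈ Icc s M, (n : ℝ) * ((n : ℝ) - 1) * τ ^ (n - 2) /
          ((s.factorial : ℝ) * (s : ℝ) ^ (n - s))
    = ∑ n ∈ range (M + 1), (n : ℝ) * ((n : ℝ) - 1) * bb s n * τ ^ (n - 2) := by
  have h1 : Icc s M = Ico s (M+1) := (Finset.Ico_add_one_right_eq_Icc s M).symm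
  rw [h1, sum_split s (M+1) (by omega)]
  congr 1
  · rcases Nat.lt_or_ge s 2 with h2 | h2
    · have hs1 : s = 1 := by omega
      subst hs1
      simp
    · have h3 := Finset.sum_range_succ' (fun n => (n:ℝ) * ((n:ℝ)-1) * bb s n * τ ^ (n-2)) (s-1)
      rw [show s - 1 + 1 = s by omega] at h3
      rw [h3]
      have h5 := Finset.sum_range_succ'
        (fun i => ((i+1:ℕ):ℝ) * (((i+1:ℕ):ℝ)-1) * bb s (i+1) * τ ^ (i+1-2)) (s-2)
      rw [show s - 2 + 1 = s - 1 by omega] at h5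
      rw [h5]
      norm_num
      refine sum_congr rfl fun i hi => ?_
      have hi' : i + 2 < s := by have := mem_range.mp hi; omega
      have e1 : i + 1 + 1 = i + 2 := rfl
      rw [e1, bb_of_lt hi', show i + 2 - 2 = i from by omega]
      have h3 : (i.factorial : ℝ) ≠ 0 := by exact_mod_cast i.factorial_ne_zero
      rw [show (i+2).factorial = (i+2)*((i+1)*i.factorial) from by
        rw [Nat.factorial_succ, Nat.factorial_succ]]
      push_cast
      field_simp
      ring
  · exact sum_congr rfl fun n hn => by rw [bb_of_ge (mem_Ico.mp hn).1]; ring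

lemma bb_of_le {s n : ℕ} (h : n ≤ s) : bb s n = 1 / (n.factorial : ℝ) := by
  rcases lt_or_eq_of_le h with h' | h'
  · exact bb_of_lt h'
  · subst h'; rw [bb_of_ge le_rfl, Nat.sub_self, pow_zero, mul_one]

lemma master (s K : ℕ) (hs : 0 < s) (hK : s + 1 ≤ K) (τ : ℝ) :
    (K:ℝ)*((K:ℝ)-1) * (∑ n ∈ range (K-1), bb s n * τ^n)
      + (s:ℝ)*τ*(∑ n ∈ range K, (n:ℝ)*((n:ℝ)-1)*bb s n*τ^(n-2))
      - (K:ℝ)*τ*(∑ n ∈ range (K-1), (n:ℝ)*bb s n*τ^(n-1))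
      - ((K:ℝ)-1)*(s:ℝ)*(∑ n ∈ range K, (n:ℝ)*bb s n*τ^(n-1))
    = ∑ i ∈ range (K-1),
        ((K:ℝ)-1-(i:ℝ)) * ((K:ℝ)*bb s i - (s:ℝ)*((i:ℝ)+1)*bb s (i+1)) * τ^i := by
  have e2 : (s:ℝ)*τ*(∑ n ∈ range K, (n:ℝ)*((n:ℝ)-1)*bb s n*τ^(n-2))
      = ∑ n ∈ range K, (s:ℝ)*(n:ℝ)*((n:ℝ)-1)*bb s n*τ^(n-1) := by
    rw [mul_sum]
    refine sum_congr rfl fun n _ => ?_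
    match n with
    | 0 => norm_num
    | 1 => norm_num
    | (m+2) =>
      rw [show m+2-2 = m from by omega, show m+2-1 = m+1 from by omega, pow_succ]
      push_cast; ring
  have e3 : (K:ℝ)*τ*(∑ n ∈ range (K-1), (n:ℝ)*bb s n*τ^(n-1))
      = ∑ n ∈ range (K-1), (K:ℝ)*(n:ℝ)*bb s n*τ^n := by
    rw [mul_sum]
    refine sum_congr rfl fun n _ => ?_
    match n with
    | 0 => norm_num
    | (m+1) => rw [Nat.add_sub_cancel, pow_succ]; push_cast; ring
  have eBD : (∑ n ∈ range K, (s:ℝ)*(n:ℝ)*((n:ℝ)-1)*bb s n*τ^(n-1))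
        - ((K:ℝ)-1)*(s:ℝ)*(∑ n ∈ range K, (n:ℝ)*bb s n*τ^(n-1))
      = ∑ i ∈ range (K-1),
          (-((s:ℝ)*((i:ℝ)+1)*((K:ℝ)-1-(i:ℝ))*bb s (i+1)*τ^i)) := by
    rw [mul_sum, ← sum_sub_distrib]
    have h := Finset.sum_range_succ'
      (fun n => (s:ℝ)*(n:ℝ)*((n:ℝ)-1)*bb s n*τ^(n-1)
        - ((K:ℝ)-1)*(s:ℝ)*((n:ℝ)*bb s n*τ^(n-1))) (K-1)
    rw [show K-1+1 = K from by omega] at h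
    rw [h]
    norm_num
    rw [← Finset.sum_sub_distrib, ← Finset.sum_neg_distrib]
    exact Finset.sum_congr rfl fun i _ => by ring
  have step : (K:ℝ)*((K:ℝ)-1) * (∑ n ∈ range (K-1), bb s n * τ^n)
      + (s:ℝ)*τ*(∑ n ∈ range K, (n:ℝ)*((n:ℝ)-1)*bb s n*τ^(n-2))
      - (K:ℝ)*τ*(∑ n ∈ range (K-1), (n:ℝ)*bb s n*τ^(n-1))
      - ((K:ℝ)-1)*(s:ℝ)*(∑ n ∈ range K, (n:ℝ)*bb s n*τ^(n-1))
      = ((K:ℝ)*((K:ℝ)-1) * (∑ n ∈ range (K-1), bb s n * τ^n)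
          - ∑ n ∈ range (K-1), (K:ℝ)*(n:ℝ)*bb s n*τ^n)
        + ((∑ n ∈ range K, (s:ℝ)*(n:ℝ)*((n:ℝ)-1)*bb s n*τ^(n-1))
          - ((K:ℝ)-1)*(s:ℝ)*(∑ n ∈ range K, (n:ℝ)*bb s n*τ^(n-1))) := by
    rw [e2, e3]; ring
  rw [step, eBD, mul_sum, ← sum_sub_distrib, ← sum_add_distrib]
  refine sum_congr rfl fun i _ => ?_
  ring

lemma key (s K n : ℕ) (hs : 0 < s) (hK : s + 1 ≤ K) (hn : n + 2 ≤ K) :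
    (s:ℝ)*((n:ℝ)+1)*bb s (n+1) ≤ (K:ℝ)*bb s n := by
  have hsK : (s:ℝ) ≤ (K:ℝ) := by exact_mod_cast by omega
  have hnK : (n:ℝ)+1 ≤ (K:ℝ) := by
    have : ((n+1:ℕ):ℝ) ≤ (K:ℝ) := by exact_mod_cast by omega
    push_cast at this; linarith
  rcases Nat.lt_or_ge n s with h | h
  · rw [bb_of_le (by omega : n + 1 ≤ s), bb_of_lt h, Nat.factorial_succ]
    have hf : (0:ℝ) < (n.factorial:ℝ) := by exact_mod_cast n.factorial_pos
    have hn1 : ((n:ℝ)+1) ≠ 0 := by positivity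
    have e1 : (s:ℝ)*((n:ℝ)+1)*(1 / (((n+1)*n.factorial : ℕ):ℝ)) = (s:ℝ)/(n.factorial:ℝ) := by
      push_cast
      field_simp
    rw [e1, mul_one_div]
    gcongr
  · rw [bb_of_ge (by omega : s ≤ n+1), bb_of_ge h, show n+1-s = (n-s)+1 from by omega,
      pow_succ]
    have hs0 : (0:ℝ) < (s:ℝ) := by exact_mod_cast hs
    have hf : (0:ℝ) < (s.factorial:ℝ) := by exact_mod_cast s.factorial_pos
    have hp : (0:ℝ) < (s:ℝ)^(n-s) := pow_pos hs0 _
    have e1 : (s:ℝ)*((n:ℝ)+1)*(1/((s.factorial:ℝ)*((s:ℝ)^(n-s)*(s:ℝ))))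
        = ((n:ℝ)+1)*(1/((s.factorial:ℝ)*(s:ℝ)^(n-s))) := by
      field_simp
    rw [e1]
    have hX : (0:ℝ) ≤ 1/((s.factorial:ℝ)*(s:ℝ)^(n-s)) := by positivity
    calc ((n:ℝ)+1)*(1/((s.factorial:ℝ)*(s:ℝ)^(n-s)))
        ≤ (K:ℝ)*(1/((s.factorial:ℝ)*(s:ℝ)^(n-s))) := mul_le_mul_of_nonneg_right hnK hX
      _ = (K:ℝ)*(1/((s.factorial:ℝ)*(s:ℝ)^(n-s))) := rfl

/-- Nonnegativity of the increment `h_{sK}(τ)` appearing in the inductive step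
of the proof that `E_{sK}(τ) ≥ 0`. -/
theorem h_sK_nonneg
    (s K : ℕ) (hs : 0 < s) (hK : s + 1 ≤ K) :
    ∀ τ : ℝ, 0 ≤ τ →
      0 ≤
        (K : ℝ) * ((K : ℝ) - 1) *
            ((∑ n ∈ Finset.range s, τ ^ n / (n.factorial : ℝ)) +
              ∑ n ∈ Finset.Icc s (K - 2),
                τ ^ n / ((s.factorial : ℝ) * (s : ℝ) ^ (n - s)))
          + (s : ℝ) * τ *
            ((∑ n ∈ Finset.range (s - 2), τ ^ n / (n.factorial : ℝ)) +
              ∑ n ∈ Finset.Icc s (K - 1),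
                (n : ℝ) * ((n : ℝ) - 1) * τ ^ (n - 2) /
                  ((s.factorial : ℝ) * (s : ℝ) ^ (n - s)))
          - (K : ℝ) * τ *
            ((∑ n ∈ Finset.range (s - 1), τ ^ n / (n.factorial : ℝ)) +
              ∑ n ∈ Finset.Icc s (K - 2),
                (n : ℝ) * τ ^ (n - 1) / ((s.factorial : ℝ) * (s : ℝ) ^ (n - s)))
          - ((K : ℝ) - 1) * (s : ℝ) *
            ((∑ n ∈ Finset.range (s - 1), τ ^ n / (n.factorial : ℝ)) +
              ∑ n ∈ Finset.Icc s (K - 1),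
                (n : ℝ) * τ ^ (n - 1) / ((s.factorial : ℝ) * (s : ℝ) ^ (n - s))) := by
  intro τ hτ
  rw [inner1 s K hs hK τ, inner3 s (K-1) hs (by omega) τ,
      inner2 s (K-2) hs (by omega) τ, inner2 s (K-1) hs (by omega) τ,
      show K - 2 + 1 = K - 1 from by omega, show K - 1 + 1 = K from by omega,
      master s K hs hK τ]
  refine Finset.sum_nonneg fun i hi => ?_
  have hi2 : i + 2 ≤ K := by have := Finset.mem_range.mp hi; omega
  have h1 : (0:ℝ) ≤ (K:ℝ) - 1 - (i:ℝ) := by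
    have : ((i+2:ℕ):ℝ) ≤ (K:ℝ) := by exact_mod_cast hi2
    push_cast at this; linarith
  have h2 := key s K i hs hK hi2
  exact mul_nonneg (mul_nonneg h1 (by linarith)) (pow_nonneg hτ i)
end

section
/- Fix integers s ≥ 2 and K ≥ s + 1, and define h_{sK}(τ) = K(K−1)·(Σ_{n=0}^{s−1} τ^n/n! + Σ_{n=s}^{K−2} τ^n/(s!·s^{n−s})) + s·τ·(Σ_{n=0}^{s−3} τ^n/n! + Σ_{n=s}^{K−1} n(n−1)·τ^{n−2}/(s!·s^{n−s})) − K·τ·(Σ_{n=0}^{s−2} τ^n/n! + Σ_{n=s}^{K−2} n·τ^{n−1}/(s!·s^{n−s})) − (K−1)·s·(Σ_{n=0}^{s−2} τ^n/n! + Σ_{n=s}^{K−1} n·τ^{n−1}/(s!·s^{n−s})). Then for every real number τ, h_{sK}(τ) = (K−s)(K−τ−1)·Σ_{n=0}^{s−3} τ^n/n! + (K−s)(K−1)·τ^{s−2}/(s−2)! + (K−s)²·τ^{s−1}/(s−1)! + Σ_{n=s}^{K−2} (K−n−1)²·τ^n/(s!·s^{n−s}). -/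
theorem reindexA (a M : ℕ) (g : ℕ → ℝ) :
    ∑ n ∈ Finset.Icc (a+2) (a+M+1), g n = ∑ i ∈ Finset.range M, g (a+2+i) := by
  rw [← Finset.Ico_add_one_right_eq_Icc, Finset.sum_Ico_eq_sum_range, show a+M+1+1-(a+2) = M by omega]

theorem reindexB (a M : ℕ) (g : ℕ → ℝ) :
    ∑ n ∈ Finset.Icc (a+2) (a+M+2), g n = g (a+2) + ∑ i ∈ Finset.range M, g (a+3+i) := by
  rw [← Finset.Ico_add_one_right_eq_Icc, Finset.sum_Ico_eq_sum_range, show a+M+2+1-(a+2) = M+1 by omega,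
    Finset.sum_range_succ', add_comm]
  congr 1
  exact Finset.sum_congr rfl fun i _ => by congr 1; omega

/-- Closed-form rearrangement of the increment `h_{sK}(τ)` from the inductive
step of the proof that `E_{sK}(τ) ≥ 0`, valid for `s ≥ 2` and `K ≥ s + 1`. -/
theorem h_sK_rearranged
    (s K : ℕ) (hs : 2 ≤ s) (hK : s + 1 ≤ K) :
    ∀ τ : ℝ,
      (K : ℝ) * ((K : ℝ) - 1) *
            ((∑ n ∈ Finset.range s, τ ^ n / (n.factorial : ℝ)) +
              ∑ n ∈ Finset.Icc s (K - 2),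
                τ ^ n / ((s.factorial : ℝ) * (s : ℝ) ^ (n - s)))
          + (s : ℝ) * τ *
            ((∑ n ∈ Finset.range (s - 2), τ ^ n / (n.factorial : ℝ)) +
              ∑ n ∈ Finset.Icc s (K - 1),
                (n : ℝ) * ((n : ℝ) - 1) * τ ^ (n - 2) /
                  ((s.factorial : ℝ) * (s : ℝ) ^ (n - s)))
          - (K : ℝ) * τ *
            ((∑ n ∈ Finset.range (s - 1), τ ^ n / (n.factorial : ℝ)) +
              ∑ n ∈ Finset.Icc s (K - 2),
                (n : ℝ) * τ ^ (n - 1) / ((s.factorial : ℝ) * (s : ℝ) ^ (n - s)))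
          - ((K : ℝ) - 1) * (s : ℝ) *
            ((∑ n ∈ Finset.range (s - 1), τ ^ n / (n.factorial : ℝ)) +
              ∑ n ∈ Finset.Icc s (K - 1),
                (n : ℝ) * τ ^ (n - 1) / ((s.factorial : ℝ) * (s : ℝ) ^ (n - s)))
        =
      ((K : ℝ) - (s : ℝ)) * ((K : ℝ) - τ - 1) *
            (∑ n ∈ Finset.range (s - 2), τ ^ n / (n.factorial : ℝ))
        + ((K : ℝ) - (s : ℝ)) * ((K : ℝ) - 1) * τ ^ (s - 2) / ((s - 2).factorial : ℝ)
        + ((K : ℝ) - (s : ℝ)) ^ 2 * τ ^ (s - 1) / ((s - 1).factorial : ℝ)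
        + ∑ n ∈ Finset.Icc s (K - 2),
            ((K : ℝ) - (n : ℝ) - 1) ^ 2 * τ ^ n /
              ((s.factorial : ℝ) * (s : ℝ) ^ (n - s)) := by
  intro τ
  obtain ⟨a, rfl⟩ : ∃ a, s = a + 2 := ⟨s - 2, by omega⟩
  obtain ⟨M, rfl⟩ : ∃ M, K = a + M + 3 := ⟨K - (a + 3), by omega⟩
  clear hs hK
  simp only [show a+M+3-2 = a+M+1 by omega, show a+M+3-1 = a+M+2 by omega,
    show a+2-2 = a by omega, show a+2-1 = a+1 by omega]
  rw [reindexA, reindexA, reindexA, reindexB, reindexB]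
  simp only [show ∀ i : ℕ, a+2+i-2 = a+i by omega, show ∀ i : ℕ, a+2+i-1 = a+1+i by omega,
    show ∀ i : ℕ, a+2+i-(a+2) = 0+i by omega, show a+2-2 = a by omega,
    show a+2-1 = a+1 by omega,
    show ∀ i : ℕ, a+3+i-2 = a+1+i by omega, show ∀ i : ℕ, a+3+i-1 = a+2+i by omega,
    show ∀ i : ℕ, a+3+i-(a+2) = 1+i by omega,
    show a+2-(a+2) = 0 by omega, pow_zero, pow_add, pow_one, mul_one]
  rw [Finset.sum_range_succ (fun n => τ ^ n / (n.factorial : ℝ)) (a+1),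
      Finset.sum_range_succ (fun n => τ ^ n / (n.factorial : ℝ)) a]
  have hfac : ((a+2).factorial : ℝ) ≠ 0 := Nat.cast_ne_zero.mpr (Nat.factorial_ne_zero _)
  have hbase : ((a:ℝ)+2) ≠ 0 := by positivity
  have hsum :
      (∑ x ∈ Finset.range M,
          (((a + M + 3 : ℕ) : ℝ) - ((a + 2 + x : ℕ) : ℝ) - 1) ^ 2 * (τ ^ a * τ ^ 2 * τ ^ x) /
            (((a+2).factorial : ℝ) * (1 * ((a + 2 : ℕ) : ℝ) ^ x)))
        =
      ((a + M + 3 : ℕ) : ℝ) * (((a + M + 3 : ℕ) : ℝ) - 1) *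
          (∑ x ∈ Finset.range M,
            τ ^ a * τ ^ 2 * τ ^ x / (((a+2).factorial : ℝ) * (1 * ((a + 2 : ℕ) : ℝ) ^ x)))
        + ((a + 2 : ℕ) : ℝ) * τ *
          (∑ x ∈ Finset.range M,
            ((a + 3 + x : ℕ) : ℝ) * (((a + 3 + x : ℕ) : ℝ) - 1) * (τ ^ a * τ * τ ^ x) /
              (((a+2).factorial : ℝ) * (((a + 2 : ℕ) : ℝ) * ((a + 2 : ℕ) : ℝ) ^ x)))
        - ((a + M + 3 : ℕ) : ℝ) * τ *
          (∑ x ∈ Finset.range M,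
            ((a + 2 + x : ℕ) : ℝ) * (τ ^ a * τ * τ ^ x) /
              (((a+2).factorial : ℝ) * (1 * ((a + 2 : ℕ) : ℝ) ^ x)))
        - (((a + M + 3 : ℕ) : ℝ) - 1) * ((a + 2 : ℕ) : ℝ) *
          (∑ x ∈ Finset.range M,
            ((a + 3 + x : ℕ) : ℝ) * (τ ^ a * τ ^ 2 * τ ^ x) /
              (((a+2).factorial : ℝ) * (((a + 2 : ℕ) : ℝ) * ((a + 2 : ℕ) : ℝ) ^ x))) := by
    rw [Finset.mul_sum, Finset.mul_sum, Finset.mul_sum, Finset.mul_sum,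
      ← Finset.sum_add_distrib, ← Finset.sum_sub_distrib, ← Finset.sum_sub_distrib]
    refine Finset.sum_congr rfl fun i _ => ?_
    have hp : ((a + 2 : ℕ) : ℝ) ^ i ≠ 0 := by positivity
    push_cast
    field_simp
    ring
  rw [hsum]
  have hfa2 : ((a+2).factorial : ℝ) = ((a:ℝ)+2) * ((a:ℝ)+1) * (a.factorial : ℝ) := by
    rw [show a + 2 = (a+1)+1 from rfl, Nat.factorial_succ, Nat.factorial_succ]
    push_cast; ring
  have hfa1 : ((a+1).factorial : ℝ) = ((a:ℝ)+1) * (a.factorial : ℝ) := by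
    rw [Nat.factorial_succ]; push_cast; ring
  have hfa0 : (a.factorial : ℝ) ≠ 0 := Nat.cast_ne_zero.mpr (Nat.factorial_ne_zero _)
  generalize (∑ n ∈ Finset.range a, τ ^ n / (n.factorial : ℝ)) = F
  generalize (∑ x ∈ Finset.range M,
      τ ^ a * τ ^ 2 * τ ^ x / (((a+2).factorial : ℝ) * (1 * ((a + 2 : ℕ) : ℝ) ^ x))) = T1
  generalize (∑ x ∈ Finset.range M,
      ((a + 3 + x : ℕ) : ℝ) * (((a + 3 + x : ℕ) : ℝ) - 1) * (τ ^ a * τ * τ ^ x) /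
        (((a+2).factorial : ℝ) * (((a + 2 : ℕ) : ℝ) * ((a + 2 : ℕ) : ℝ) ^ x))) = T2
  generalize (∑ x ∈ Finset.range M,
      ((a + 2 + x : ℕ) : ℝ) * (τ ^ a * τ * τ ^ x) /
        (((a+2).factorial : ℝ) * (1 * ((a + 2 : ℕ) : ℝ) ^ x))) = T3
  generalize (∑ x ∈ Finset.range M,
      ((a + 3 + x : ℕ) : ℝ) * (τ ^ a * τ ^ 2 * τ ^ x) /
        (((a+2).factorial : ℝ) * (((a + 2 : ℕ) : ℝ) * ((a + 2 : ℕ) : ℝ) ^ x))) = T4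
  rw [hfa2, hfa1]
  push_cast
  have h1 : ((a:ℝ)+1) ≠ 0 := by positivity
  field_simp
  ring
end

section
/- Fix integers s and K with 2 ≤ s ≤ K. Then for every real number τ ≥ 0, (K−s)·(K−τ−1)·Σ_{n=0}^{s−3} τ^n/n! + (K−s)·(K−1)·τ^{s−2}/(s−2)! ≥ 0. -/
lemma h_prime_key (b τ : ℝ) (m : ℕ) :
    (b - τ) * (∑ n ∈ Finset.range m, τ ^ n / (n.factorial : ℝ))
      + b * τ ^ m / (m.factorial : ℝ)
    = ∑ n ∈ Finset.range (m + 1), (b - n) * τ ^ n / (n.factorial : ℝ) := by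
  induction m with
  | zero => simp
  | succ m ih =>
    rw [Finset.sum_range_succ, Finset.sum_range_succ
      (f := fun n => (b - n) * τ ^ n / (n.factorial : ℝ)), ← ih]
    have hf : ((m + 1).factorial : ℝ) = (m + 1) * (m.factorial : ℝ) := by
      push_cast [Nat.factorial_succ]; ring
    have hm : (m.factorial : ℝ) ≠ 0 := by positivity
    rw [hf]
    push_cast
    field_simp
    ring

/-- The inequality `h'_{sK}(τ) ≥ 0` from the inductive step of the proof that
`E_{sK}(τ) ≥ 0`, for integers `2 ≤ s ≤ K` and real `τ ≥ 0`. -/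
theorem h_prime_sK_nonneg
    (s K : ℕ) (hs : 2 ≤ s) (hsK : s ≤ K) :
    ∀ τ : ℝ, 0 ≤ τ →
      0 ≤ ((K : ℝ) - (s : ℝ)) * ((K : ℝ) - τ - 1) *
            (∑ n ∈ Finset.range (s - 2), τ ^ n / (n.factorial : ℝ))
          + ((K : ℝ) - (s : ℝ)) * ((K : ℝ) - 1) * τ ^ (s - 2) /
            ((s - 2).factorial : ℝ) := by
  intro τ hτ
  have hKs : (0 : ℝ) ≤ (K : ℝ) - (s : ℝ) := by
    have : (s : ℝ) ≤ K := by exact_mod_cast hsK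
    linarith
  have hkey := h_prime_key ((K : ℝ) - 1) τ (s - 2)
  have heq : ((K : ℝ) - (s : ℝ)) * ((K : ℝ) - τ - 1) *
            (∑ n ∈ Finset.range (s - 2), τ ^ n / (n.factorial : ℝ))
          + ((K : ℝ) - (s : ℝ)) * ((K : ℝ) - 1) * τ ^ (s - 2) /
            ((s - 2).factorial : ℝ)
      = ((K : ℝ) - (s : ℝ)) *
          (∑ n ∈ Finset.range (s - 2 + 1), ((K : ℝ) - 1 - n) * τ ^ n / (n.factorial : ℝ)) := by
    rw [← hkey]; ring
  rw [heq]
  apply mul_nonneg hKs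
  apply Finset.sum_nonneg
  intro n hn
  have hn' : n + 1 ≤ K := by
    have := Finset.mem_range.mp hn
    omega
  have h1 : (0 : ℝ) ≤ (K : ℝ) - 1 - n := by
    have : ((n : ℝ) + 1) ≤ K := by exact_mod_cast hn'
    linarith
  have h2 : (0 : ℝ) ≤ τ ^ n := pow_nonneg hτ n
  have h3 : (0 : ℝ) ≤ (n.factorial : ℝ) := by positivity
  exact div_nonneg (mul_nonneg h1 h2) h3
end

section
/- Fix positive integers s and K with s ≤ K and a real number μ > 0. Define coefficients a_n = 1/n! for 0 ≤ n < s and a_n = 1/(s^{n−s}·s!) for s ≤ n ≤ K, let N(τ) = Σ_{n=1}^{K} n·a_n·τ^{n−1} and D(τ) = Σ_{m=0}^{K−1} a_m·τ^m, and define the average waiting time w̄(λ) = N(λ/μ)/(μ·D(λ/μ)) for λ ≥ 0. Then the function F_w(z) = ∫₀^z w̄(q) dq is convex on [0, ∞). -/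
open Finset

/-- Cross-multiplication monotonicity for ratios of polynomials whose coefficient
ratios are monotone. -/
lemma mmsk_cross_sum_nonneg (K : ℕ) (c d : ℕ → ℝ)
    (hc : ∀ n, n < K → 0 ≤ c n) (hd : ∀ n, n < K → 0 ≤ d n)
    (hr : ∀ m n, m ≤ n → n < K → c m * d n ≤ c n * d m)
    {x y : ℝ} (hx : 0 ≤ x) (hxy : x ≤ y) :
    (∑ j ∈ range K, c j * x ^ j) * (∑ j ∈ range K, d j * y ^ j)
      ≤ (∑ j ∈ range K, c j * y ^ j) * (∑ j ∈ range K, d j * x ^ j) := by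
  have hy : 0 ≤ y := hx.trans hxy
  rw [← sub_nonneg]
  have expand : (∑ j ∈ range K, c j * y ^ j) * (∑ j ∈ range K, d j * x ^ j)
      - (∑ j ∈ range K, c j * x ^ j) * (∑ j ∈ range K, d j * y ^ j)
      = ∑ n ∈ range K, ∑ m ∈ range K,
          c n * d m * (y ^ n * x ^ m - x ^ n * y ^ m) := by
    rw [Finset.sum_mul_sum, Finset.sum_mul_sum, ← Finset.sum_sub_distrib]
    refine Finset.sum_congr rfl fun n _ => by
      rw [← Finset.sum_sub_distrib]
      exact Finset.sum_congr rfl fun m _ => by ring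
  rw [expand]
  set g : ℕ → ℕ → ℝ := fun n m => c n * d m * (y ^ n * x ^ m - x ^ n * y ^ m) with hg
  -- pointwise nonnegativity of symmetrized terms
  have hpow : ∀ m k : ℕ, x ^ (m + k) * y ^ m ≤ y ^ (m + k) * x ^ m := by
    intro m k
    have h1 : x ^ k ≤ y ^ k := pow_le_pow_left₀ hx hxy k
    have e1 : x ^ (m + k) * y ^ m = (x * y) ^ m * x ^ k := by
      rw [pow_add, mul_pow]; ring
    have e2 : y ^ (m + k) * x ^ m = (x * y) ^ m * y ^ k := by
      rw [pow_add, mul_pow]; ring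
    rw [e1, e2]
    exact mul_le_mul_of_nonneg_left h1 (by positivity)
  have key : ∀ n m, n < K → m < K → 0 ≤ g n m + g m n := by
    have main : ∀ n m, m ≤ n → n < K → m < K → 0 ≤ g n m + g m n := by
      intro n m hmn hn hm
      have heq : g n m + g m n = (c n * d m - c m * d n) *
          (y ^ n * x ^ m - x ^ n * y ^ m) := by simp only [hg]; ring
      rw [heq]
      obtain ⟨k, rfl⟩ := Nat.exists_eq_add_of_le hmn
      exact mul_nonneg (sub_nonneg.2 (hr m (m + k) hmn hn))
        (sub_nonneg.2 (hpow m k))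
    intro n m hn hm
    rcases le_total m n with h | h
    · exact main n m h hn hm
    · have := main m n h hm hn
      linarith
  have hcomm : (∑ n ∈ range K, ∑ m ∈ range K, g n m)
      = ∑ n ∈ range K, ∑ m ∈ range K, g m n := Finset.sum_comm
  have h2 : 0 ≤ ∑ n ∈ range K, ∑ m ∈ range K, (g n m + g m n) := by
    refine Finset.sum_nonneg fun n hn => Finset.sum_nonneg fun m hm => ?_
    exact key n m (Finset.mem_range.1 hn) (Finset.mem_range.1 hm)
  have h3 : ∑ n ∈ range K, ∑ m ∈ range K, (g n m + g m n)
      = (∑ n ∈ range K, ∑ m ∈ range K, g n m)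
        + ∑ n ∈ range K, ∑ m ∈ range K, g m n := by
    rw [← Finset.sum_add_distrib]
    exact Finset.sum_congr rfl fun n _ => by rw [← Finset.sum_add_distrib]
  rw [h3, ← hcomm] at h2
  linarith

/-- The integral `F_w(z) = ∫₀^z w̄(q) dq` of the average waiting time of the
`M/M/s/K` queue is convex on `[0, ∞)`. -/
theorem mmsk_waiting_integral_convex
    (s K : ℕ) (hs : 0 < s) (hsK : s ≤ K) (μ : ℝ) (hμ : 0 < μ)
    (a : ℕ → ℝ)
    (ha1 : ∀ n, n < s → a n = 1 / (n.factorial : ℝ))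
    (ha2 : ∀ n, s ≤ n → n ≤ K → a n = 1 / ((s : ℝ) ^ (n - s) * (s.factorial : ℝ)))
    (w : ℝ → ℝ)
    (hw : ∀ lam : ℝ, 0 ≤ lam →
      w lam = (∑ n ∈ Finset.Icc 1 K, (n : ℝ) * a n * (lam / μ) ^ (n - 1)) /
        (μ * ∑ m ∈ Finset.range K, a m * (lam / μ) ^ m)) :
    ConvexOn ℝ (Set.Ici (0 : ℝ)) (fun z => ∫ q in (0 : ℝ)..z, w q) := by
  have hspos : (0 : ℝ) < (s : ℝ) := by exact_mod_cast hs
  -- positivity of the coefficients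
  have hapos : ∀ n, n ≤ K → 0 < a n := by
    intro n hn
    rcases lt_or_ge n s with h | h
    · rw [ha1 n h]; positivity
    · rw [ha2 n h hn]; positivity
  -- unified formula up to `s`
  have haeq : ∀ n, n ≤ s → a n = 1 / (n.factorial : ℝ) := by
    intro n hn
    rcases lt_or_ge n s with h | h
    · exact ha1 n h
    · have : n = s := le_antisymm hn h
      subst this
      rw [ha2 n le_rfl (le_trans hn hsK)]
      simp
  -- the step identity: (j+1)·a(j+1) = max 1 ((j+1)/s) · a j
  have step : ∀ j : ℕ, j + 1 ≤ K →
      ((j : ℝ) + 1) * a (j + 1) = max 1 (((j : ℝ) + 1) / s) * a j := by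
    intro j hj
    rcases lt_or_ge j s with h | h
    · -- j < s, so j+1 ≤ s : ratio is 1
      have hmax : max 1 (((j : ℝ) + 1) / s) = 1 := by
        rw [max_eq_left]
        rw [div_le_one hspos]
        exact_mod_cast h
      rw [hmax, one_mul, haeq (j + 1) h, haeq j h.le]
      rw [Nat.factorial_succ]
      push_cast
      field_simp
    · -- s ≤ j : ratio is (j+1)/s
      have hmax : max 1 (((j : ℝ) + 1) / s) = ((j : ℝ) + 1) / s := by
        rw [max_eq_right]
        rw [le_div_iff₀ hspos, one_mul]
        have : (s : ℝ) ≤ (j : ℝ) := by exact_mod_cast h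
        linarith
      rw [hmax, ha2 j h (by omega), ha2 (j + 1) (by omega) hj]
      have hps : (j + 1 - s) = (j - s) + 1 := by omega
      rw [hps, pow_succ, mul_one_div, mul_one_div, div_div]
      rw [div_eq_div_iff (by positivity) (by positivity)]
      ring
  -- coefficient sequences
  set c : ℕ → ℝ := fun j => ((j : ℝ) + 1) * a (j + 1) with hcdef
  set d : ℕ → ℝ := fun j => a j with hddef
  have hc : ∀ n, n < K → 0 ≤ c n := fun n hn =>
    mul_nonneg (by positivity) (hapos (n + 1) (by omega)).le
  have hd : ∀ n, n < K → 0 ≤ d n := fun n hn => (hapos n (by omega)).le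
  have hr : ∀ m n, m ≤ n → n < K → c m * d n ≤ c n * d m := by
    intro m n hmn hn
    have hm : m < K := lt_of_le_of_lt hmn hn
    have e1 : c m * d n = max 1 (((m : ℝ) + 1) / s) * (a m * a n) := by
      simp only [hcdef, hddef]
      rw [step m (by omega)]; ring
    have e2 : c n * d m = max 1 (((n : ℝ) + 1) / s) * (a n * a m) := by
      simp only [hcdef, hddef]
      rw [step n (by omega)]; ring
    rw [e1, e2, mul_comm (a m) (a n)]
    refine mul_le_mul_of_nonneg_right ?_
      (mul_nonneg (hapos n (by omega)).le (hapos m (by omega)).le)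
    refine max_le_max le_rfl ?_
    gcongr
  -- rewrite the numerator sum
  have hNre : ∀ τ : ℝ, (∑ n ∈ Finset.Icc 1 K, (n : ℝ) * a n * τ ^ (n - 1))
      = ∑ j ∈ range K, c j * τ ^ j := by
    intro τ
    rw [← Finset.Ico_add_one_right_eq_Icc, Finset.sum_Ico_eq_sum_range]
    refine Finset.sum_congr rfl fun j _ => ?_
    simp only [hcdef]
    have : 1 + j - 1 = j := by omega
    rw [this]
    push_cast
    ring
  -- the continuous representative
  set g : ℝ → ℝ := fun lam =>
    (∑ j ∈ range K, c j * (lam / μ) ^ j) /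
      (μ * ∑ j ∈ range K, d j * (lam / μ) ^ j) with hgdef
  have hweq : ∀ lam : ℝ, 0 ≤ lam → w lam = g lam := by
    intro lam hlam
    rw [hw lam hlam, hgdef, hNre]
  -- denominator positivity
  have hKpos : 0 < K := lt_of_lt_of_le hs hsK
  have hDpos : ∀ τ : ℝ, 0 ≤ τ → 0 < ∑ j ∈ range K, d j * τ ^ j := by
    intro τ hτ
    refine Finset.sum_pos' (fun j hj => mul_nonneg (hd j (Finset.mem_range.1 hj))
      (by positivity)) ⟨0, Finset.mem_range.2 hKpos, ?_⟩
    simp only [hddef, pow_zero, mul_one]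
    exact hapos 0 (by omega)
  -- monotonicity of w on [0, ∞)
  have hmono : MonotoneOn w (Set.Ici (0 : ℝ)) := by
    intro p hp q hq hpq
    have hp0 : (0 : ℝ) ≤ p := hp
    have hq0 : (0 : ℝ) ≤ q := hq
    rw [hweq p hp0, hweq q hq0, hgdef]
    have hτp : 0 ≤ p / μ := div_nonneg hp0 hμ.le
    have hτq : 0 ≤ q / μ := div_nonneg hq0 hμ.le
    have hττ : p / μ ≤ q / μ := by gcongr
    have hcross := mmsk_cross_sum_nonneg K c d hc hd hr hτp hττ
    have hDp := hDpos (p / μ) hτp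
    have hDq := hDpos (q / μ) hτq
    rw [div_le_div_iff₀ (by positivity) (by positivity)]
    nlinarith [hcross, hμ]
  -- integrability on nonnegative intervals
  have hgcont : ContinuousOn g (Set.Ici (0 : ℝ)) := by
    apply ContinuousOn.div
    · exact (continuous_finset_sum _ fun i _ =>
        continuous_const.mul ((continuous_id.div_const μ).pow i)).continuousOn
    · exact (continuous_const.mul (continuous_finset_sum _ fun i _ =>
        continuous_const.mul ((continuous_id.div_const μ).pow i))).continuousOn
    · intro t ht
      exact ne_of_gt (mul_pos hμ (hDpos (t / μ) (div_nonneg ht hμ.le)))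
  have hInt : ∀ u v : ℝ, 0 ≤ u → 0 ≤ v → IntervalIntegrable w MeasureTheory.volume u v := by
    intro u v hu hv
    have hsub : Set.uIcc u v ⊆ Set.Ici (0 : ℝ) := by
      intro t ht
      rw [Set.mem_uIcc] at ht
      rcases ht with ⟨h1, _⟩ | ⟨h1, _⟩
      · exact Set.mem_Ici.2 (le_trans hu h1)
      · exact Set.mem_Ici.2 (le_trans hv h1)
    have hgint : IntervalIntegrable g MeasureTheory.volume u v :=
      (hgcont.mono hsub).intervalIntegrable
    rw [intervalIntegrable_iff] at hgint ⊢
    refine hgint.congr_fun (fun t ht => ?_) measurableSet_uIoc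
    have ht0 : 0 ≤ t := by
      have := Set.uIoc_subset_uIcc ht
      exact hsub this
    exact (hweq t ht0).symm
  -- the key convexity estimate
  have key : ∀ p : ℝ, p ∈ Set.Ici (0:ℝ) → ∀ q : ℝ, q ∈ Set.Ici (0:ℝ) → p ≤ q →
      ∀ b : ℝ, 0 ≤ b → b ≤ 1 →
      (∫ t in (0:ℝ)..((1-b) * p + b * q), w t)
        ≤ (1-b) * (∫ t in (0:ℝ)..p, w t) + b * (∫ t in (0:ℝ)..q, w t) := by
    intro p hp q hq hpq b hb hb1
    have hp0 : (0:ℝ) ≤ p := hp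
    have hq0 : (0:ℝ) ≤ q := hq
    set z : ℝ := (1-b) * p + b * q with hzdef
    have hxz : p ≤ z := by nlinarith
    have hzy : z ≤ q := by nlinarith
    have hz0 : (0:ℝ) ≤ z := hp0.trans hxz
    have h1 : (∫ t in (0:ℝ)..p, w t) + (∫ t in p..z, w t) = ∫ t in (0:ℝ)..z, w t :=
      intervalIntegral.integral_add_adjacent_intervals (hInt 0 p le_rfl hp0)
        (hInt p z hp0 hz0)
    have h2 : (∫ t in (0:ℝ)..z, w t) + (∫ t in z..q, w t) = ∫ t in (0:ℝ)..q, w t :=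
      intervalIntegral.integral_add_adjacent_intervals (hInt 0 z le_rfl hz0)
        (hInt z q hz0 hq0)
    have hup : (∫ t in p..z, w t) ≤ w z * (z - p) := by
      have : (∫ t in p..z, w t) ≤ ∫ _t in p..z, w z := by
        refine intervalIntegral.integral_mono_on hxz (hInt p z hp0 hz0)
          intervalIntegrable_const fun t ht => ?_
        exact hmono (Set.mem_Ici.2 (hp0.trans ht.1)) (Set.mem_Ici.2 hz0) ht.2
      simpa [intervalIntegral.integral_const, smul_eq_mul, mul_comm] using this
    have hlow : w z * (q - z) ≤ ∫ t in z..q, w t := by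
      have : (∫ _t in z..q, w z) ≤ ∫ t in z..q, w t := by
        refine intervalIntegral.integral_mono_on hzy intervalIntegrable_const
          (hInt z q hz0 hq0) fun t ht => ?_
        exact hmono (Set.mem_Ici.2 hz0) (Set.mem_Ici.2 (hz0.trans ht.1)) ht.1
      simpa [intervalIntegral.integral_const, smul_eq_mul, mul_comm] using this
    have hzp : z - p = b * (q - p) := by rw [hzdef]; ring
    have hqz : q - z = (1 - b) * (q - p) := by rw [hzdef]; ring
    have h1b : (0:ℝ) ≤ 1 - b := by linarith
    have key1 : (1-b) * (∫ t in p..z, w t) ≤ (1-b) * (w z * (b * (q - p))) := by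
      rw [← hzp]; exact mul_le_mul_of_nonneg_left hup h1b
    have key2 : b * (w z * ((1-b) * (q - p))) ≤ b * (∫ t in z..q, w t) := by
      rw [← hqz]; exact mul_le_mul_of_nonneg_left hlow hb
    have ringeq : (1-b) * (w z * (b * (q - p))) = b * (w z * ((1-b) * (q - p))) := by
      ring
    have m1 : (1-b) * ((∫ t in (0:ℝ)..p, w t) + ∫ t in p..z, w t)
        = (1-b) * ∫ t in (0:ℝ)..z, w t := by rw [h1]
    have m2 : b * ((∫ t in (0:ℝ)..z, w t) + ∫ t in z..q, w t)
        = b * ∫ t in (0:ℝ)..q, w t := by rw [h2]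
    nlinarith [m1, m2, key1, key2, ringeq]
  -- assemble convexity
  refine ⟨convex_Ici 0, ?_⟩
  intro p hp q hq ca cb hca hcb hab
  simp only [smul_eq_mul]
  have hca1 : ca = 1 - cb := by linarith
  have hcb1 : cb = 1 - ca := by linarith
  rcases le_total p q with h | h
  · have := key p hp q hq h cb hcb (by linarith)
    rw [← hca1] at this
    exact this
  · have := key q hq p hp h ca hca (by linarith)
    rw [← hcb1] at this
    calc (∫ t in (0:ℝ)..(ca * p + cb * q), w t)
        = ∫ t in (0:ℝ)..(cb * q + ca * p), w t := by rw [add_comm]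
      _ ≤ cb * (∫ t in (0:ℝ)..q, w t) + ca * (∫ t in (0:ℝ)..p, w t) := this
      _ = ca * (∫ t in (0:ℝ)..p, w t) + cb * (∫ t in (0:ℝ)..q, w t) := by ring
end

section
/- Let I and J be nonempty finite sets, let θ > 0, α ≥ 0, β ≥ 0 be real numbers, and let t : I × J → ℝ. For each j ∈ J, fix positive integers s_j ≤ K_j and a real μ_j > 0, define coefficients a^j_n = 1/n! for 0 ≤ n < s_j and a^j_n = 1/(s_j^{n−s_j}·s_j!) for s_j ≤ n ≤ K_j, the balking probability p̄_j(λ) = a^j_{K_j}·(λ/μ_j)^{K_j} / Σ_{m=0}^{K_j} a^j_m·(λ/μ_j)^m, and the average waiting time w̄_j(λ) = (Σ_{n=1}^{K_j} n·a^j_n·(λ/μ_j)^{n−1}) / (μ_j·Σ_{m=0}^{K_j−1} a^j_m·(λ/μ_j)^m). Then the function G(y, λ) = Σ_{i∈I} Σ_{j∈J} ((1/θ)·y_{ij}·ln(y_{ij}) + t_{ij}·y_{ij}) + Σ_{j∈J} (α·∫₀^{λ_j} w̄_j(q) dq + β·∫₀^{λ_j} p̄_j(q) dq), with the convention 0·ln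 0 = 0, is convex on the convex set {(y, λ) ∈ ℝ^{I×J} × ℝ^{J} : y_{ij} ≥ 0 for all (i,j), λ_j ≥ 0 for all j}. Consequently, the lower-level user-equilibrium problem, which minimizes G over this set intersected with the affine constraints Σ_{j} y_{ij} = d_i for all i and λ_j = Σ_i y_{ij} for all j (with d : I → ℝ given), is a convex optimization problem. -/
open Real Set MeasureTheory intervalIntegral Finset

namespace LLPC

/-- ratio `k * a k / a (k-1)` for the M/M/s/K coefficients. -/
noncomputable def rho (s k : ℕ) : ℝ := if k ≤ s then 1 else (k : ℝ) / s

lemma rho_mono {s : ℕ} (hs : 0 < s) : Monotone (rho s) := by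
  intro k l hkl
  unfold rho
  have hs' : (0:ℝ) < s := by exact_mod_cast hs
  by_cases hl : l ≤ s
  · rw [if_pos (hkl.trans hl), if_pos hl]
  · rw [if_neg hl]
    push_neg at hl
    have hl' : (1:ℝ) ≤ (l:ℝ) / s := by
      rw [le_div_iff₀ hs', one_mul]; exact_mod_cast hl.le
    by_cases hk : k ≤ s
    · rw [if_pos hk]; exact hl'
    · rw [if_neg hk]
      gcongr

section coeffs

variable {s K : ℕ} {a : ℕ → ℝ}
variable (hs : 0 < s) (hsK : s ≤ K)
  (ha1 : ∀ n, n < s → a n = 1 / (n.factorial : ℝ))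
  (ha2 : ∀ n, s ≤ n → n ≤ K → a n = 1 / ((s : ℝ) ^ (n - s) * (s.factorial : ℝ)))

include hs hsK ha1 ha2

lemma a_pos {n : ℕ} (hn : n ≤ K) : 0 < a n := by
  have hs' : (0:ℝ) < s := by exact_mod_cast hs
  rcases lt_or_ge n s with h | h
  · rw [ha1 n h]
    exact div_pos one_pos (by exact_mod_cast n.factorial_pos)
  · rw [ha2 n h hn]
    exact div_pos one_pos (mul_pos (pow_pos hs' _) (by exact_mod_cast s.factorial_pos))

lemma key_ratio {k : ℕ} (hk1 : 1 ≤ k) (hkK : k ≤ K) :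
    (k : ℝ) * a k = rho s k * a (k - 1) := by
  have hs' : (0:ℝ) < s := by exact_mod_cast hs
  obtain ⟨m, rfl⟩ : ∃ m, k = m + 1 := ⟨k - 1, (Nat.succ_pred_eq_of_pos hk1).symm⟩
  simp only [Nat.add_sub_cancel]
  rcases le_or_gt (m + 1) s with h | h
  · rw [rho, if_pos h, one_mul]
    rcases lt_or_eq_of_le h with h' | h'
    · rw [ha1 _ h', ha1 _ (by omega)]
      have hf : ((m+1).factorial : ℝ) = (m+1) * m.factorial := by
        rw [Nat.factorial_succ]; push_cast; ring
      have hf0 : (m.factorial : ℝ) ≠ 0 := by exact_mod_cast m.factorial_ne_zero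
      have hm0 : ((m:ℝ)+1) ≠ 0 := by positivity
      rw [hf]
      field_simp
      norm_num
    · -- m + 1 = s
      rw [ha2 _ h'.ge hkK, ha1 _ (by omega)]
      have : m + 1 - s = 0 := by omega
      rw [this, pow_zero, one_mul]
      have hf : (s.factorial : ℝ) = s * m.factorial := by
        have : s = m + 1 := h'.symm
        subst this
        rw [Nat.factorial_succ]; push_cast; ring
      rw [hf]
      have hf0 : (m.factorial : ℝ) ≠ 0 := by exact_mod_cast m.factorial_ne_zero
      have : (s:ℝ) ≠ 0 := ne_of_gt hs'
      field_simp
      exact_mod_cast h'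
  · rw [rho, if_neg (by omega)]
    rw [ha2 _ (by omega) hkK, ha2 _ (by omega) (by omega)]
    have hpow : (s:ℝ) ^ (m + 1 - s) = s * (s:ℝ) ^ (m - s) := by
      have : m + 1 - s = (m - s) + 1 := by omega
      rw [this, pow_succ]; ring
    have hf0 : (s.factorial : ℝ) ≠ 0 := by exact_mod_cast s.factorial_ne_zero
    have hsne : (s:ℝ) ≠ 0 := ne_of_gt hs'
    rw [hpow]
    have hp0 : (s:ℝ) ^ (m - s) ≠ 0 := pow_ne_zero _ hsne
    rw [one_div, one_div, mul_inv, mul_inv, div_eq_mul_inv]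
    push_cast
    ring

lemma pair_ineq {n m : ℕ} (hn1 : 1 ≤ n) (hnK : n ≤ K) (hm1 : m + 1 ≤ K) (hmn : m + 1 ≤ n) :
    ((m : ℝ) + 1) * a (m + 1) * a (n - 1) ≤ (n : ℝ) * a n * a m := by
  have h1 : (n : ℝ) * a n = rho s n * a (n - 1) := key_ratio hs hsK ha1 ha2 hn1 hnK
  have h2 : ((m : ℝ) + 1) * a (m + 1) = rho s (m + 1) * a m := by
    have := key_ratio hs hsK ha1 ha2 (Nat.le_add_left 1 m) hm1
    push_cast at this
    simpa using this
  rw [h1, h2]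
  have hrho : rho s (m + 1) ≤ rho s n := rho_mono hs hmn
  have ham : 0 < a m := a_pos hs hsK ha1 ha2 (by omega)
  have han : 0 < a (n - 1) := a_pos hs hsK ha1 ha2 (by omega)
  calc rho s (m+1) * a m * a (n-1) ≤ rho s n * a m * a (n-1) := by
        apply mul_le_mul_of_nonneg_right (mul_le_mul_of_nonneg_right hrho ham.le) han.le
    _ = rho s n * a (n-1) * a m := by ring

end coeffs

lemma pow_cross {x y : ℝ} (hx : 0 ≤ x) (hxy : x ≤ y) {m n : ℕ} (hmn : m ≤ n) :
    x ^ n * y ^ m ≤ y ^ n * x ^ m := by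
  have hy : 0 ≤ y := hx.trans hxy
  obtain ⟨d, rfl⟩ := Nat.exists_eq_add_of_le hmn
  rw [pow_add, pow_add]
  have h1 : x ^ d ≤ y ^ d := pow_le_pow_left₀ hx hxy d
  nlinarith [mul_nonneg (pow_nonneg hx m) (pow_nonneg hy m), sub_nonneg.mpr h1,
    mul_nonneg (mul_nonneg (pow_nonneg hx m) (pow_nonneg hy m)) (sub_nonneg.mpr h1)]

section funs

variable {s K : ℕ} {a : ℕ → ℝ}

/-- balking probability as a function of `x = lam / mu`. -/
noncomputable def pfun (a : ℕ → ℝ) (K : ℕ) (x : ℝ) : ℝ :=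
  a K * x ^ K / (∑ m ∈ Finset.range (K + 1), a m * x ^ m)

noncomputable def Nf (a : ℕ → ℝ) (K : ℕ) (x : ℝ) : ℝ :=
  ∑ n ∈ Finset.Icc 1 K, (n : ℝ) * a n * x ^ (n - 1)

noncomputable def Df (a : ℕ → ℝ) (K : ℕ) (x : ℝ) : ℝ :=
  ∑ m ∈ Finset.range K, a m * x ^ m

/-- waiting time as a function of `x = lam/mu`, with parameter `mu`. -/
noncomputable def wfun (a : ℕ → ℝ) (K : ℕ) (mu : ℝ) (x : ℝ) : ℝ :=
  Nf a K x / (mu * Df a K x)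

lemma pden_pos (hpos : ∀ n ≤ K, 0 < a n) {x : ℝ} (hx : 0 ≤ x) :
    0 < ∑ m ∈ Finset.range (K + 1), a m * x ^ m := by
  refine Finset.sum_pos' (fun m hm => mul_nonneg (hpos m (by simpa [Nat.lt_succ] using hm)).le
    (pow_nonneg hx m)) ⟨0, Finset.mem_range.2 (Nat.succ_pos K), by
      simpa using (hpos 0 (Nat.zero_le K))⟩

lemma Df_pos (hK : 0 < K) (hpos : ∀ n ≤ K, 0 < a n) {x : ℝ} (hx : 0 ≤ x) :
    0 < Df a K x := by
  refine Finset.sum_pos' (fun m hm => mul_nonneg (hpos m (le_of_lt (Finset.mem_range.1 hm))).le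
    (pow_nonneg hx m)) ⟨0, Finset.mem_range.2 hK, by simpa using (hpos 0 (Nat.zero_le K))⟩

lemma pfun_monotoneOn (hpos : ∀ n ≤ K, 0 < a n) :
    MonotoneOn (pfun a K) (Set.Ici (0 : ℝ)) := by
  intro x hx y hy hxy
  have hx' : (0:ℝ) ≤ x := hx
  have hy' : (0:ℝ) ≤ y := hy
  have dx := pden_pos hpos hx'
  have dy := pden_pos hpos hy'
  rw [pfun, pfun, div_le_div_iff₀ dx dy]
  rw [Finset.mul_sum, Finset.mul_sum]
  refine Finset.sum_le_sum fun m hm => ?_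
  have hmK : m ≤ K := by simpa [Nat.lt_succ] using hm
  have hc := pow_cross hx' hxy hmK
  have haK := (hpos K le_rfl).le
  have ham := (hpos m hmK).le
  nlinarith [mul_nonneg haK ham]

variable (hs : 0 < s) (hsK : s ≤ K)
  (ha1 : ∀ n, n < s → a n = 1 / (n.factorial : ℝ))
  (ha2 : ∀ n, s ≤ n → n ≤ K → a n = 1 / ((s : ℝ) ^ (n - s) * (s.factorial : ℝ)))

include hs hsK ha1 ha2

lemma Nf_Df_cross {x y : ℝ} (hx : 0 ≤ x) (hxy : x ≤ y) :
    Nf a K x * Df a K y ≤ Nf a K y * Df a K x := by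
  classical
  have hpos : ∀ n ≤ K, 0 < a n := fun n hn => a_pos hs hsK ha1 ha2 hn
  set S : Finset (ℕ × ℕ) := Finset.Icc 1 K ×ˢ Finset.range K with hS
  set F : ℕ × ℕ → ℝ := fun p =>
    (p.1 : ℝ) * a p.1 * a p.2 * (x ^ (p.1 - 1) * y ^ p.2 - x ^ p.2 * y ^ (p.1 - 1)) with hF
  have key : Nf a K x * Df a K y - Nf a K y * Df a K x = ∑ p ∈ S, F p := by
    rw [hS, Finset.sum_product]
    rw [Nf, Nf, Df, Df, Finset.sum_mul_sum, Finset.sum_mul_sum, ← Finset.sum_sub_distrib]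
    refine Finset.sum_congr rfl fun n _ => ?_
    rw [← Finset.sum_sub_distrib]
    refine Finset.sum_congr rfl fun m _ => ?_
    simp only [hF]
    ring
  have hmemS : ∀ p ∈ S, 1 ≤ p.1 ∧ p.1 ≤ K ∧ p.2 < K := by
    intro p hp
    rw [hS, Finset.mem_product, Finset.mem_Icc, Finset.mem_range] at hp
    exact ⟨hp.1.1, hp.1.2, hp.2⟩
  have hsig : ∀ p ∈ S, ((p.2 + 1, p.1 - 1) : ℕ × ℕ) ∈ S := by
    intro p hp
    obtain ⟨h1, h2, h3⟩ := hmemS p hp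
    rw [hS, Finset.mem_product, Finset.mem_Icc, Finset.mem_range]
    exact ⟨⟨Nat.le_add_left 1 p.2, h3⟩, by omega⟩
  have e2 : ∑ p ∈ S, F (p.2 + 1, p.1 - 1) = ∑ p ∈ S, F p := by
    refine Finset.sum_nbij' (fun p => (p.2 + 1, p.1 - 1)) (fun p => (p.2 + 1, p.1 - 1))
      hsig hsig ?_ ?_ ?_
    · intro p hp
      obtain ⟨h1, _, _⟩ := hmemS p hp
      simp only
      ext <;> simp <;> omega
    · intro p hp
      obtain ⟨h1, _, _⟩ := hmemS p hp
      ext <;> simp <;> omega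
    · intro p hp; rfl
  have hterm : ∀ p ∈ S, F p + F (p.2 + 1, p.1 - 1) ≤ 0 := by
    rintro ⟨n, m⟩ hp
    obtain ⟨h1, h2, h3⟩ := hmemS _ hp
    obtain ⟨n', rfl⟩ : ∃ n', n = n' + 1 := ⟨n - 1, by omega⟩
    simp only [hF, Nat.add_sub_cancel]
    have expand : ((n' + 1 : ℕ) : ℝ) * a (n' + 1) * a m *
          (x ^ n' * y ^ m - x ^ m * y ^ n') +
        ((m + 1 : ℕ) : ℝ) * a (m + 1) * a n' *
          (x ^ m * y ^ n' - x ^ n' * y ^ m) =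
        (x ^ n' * y ^ m - x ^ m * y ^ n') *
          (((n' + 1 : ℕ) : ℝ) * a (n' + 1) * a m - ((m + 1 : ℕ) : ℝ) * a (m + 1) * a n') := by
      ring
    rw [expand]
    rcases le_total (m + 1) (n' + 1) with hc | hc
    · -- n' ≥ m : first factor ≤ 0, second ≥ 0
      have hf1 : x ^ n' * y ^ m ≤ y ^ n' * x ^ m := pow_cross hx hxy (by omega)
      have hf2 : ((m : ℝ) + 1) * a (m + 1) * a ((n' + 1) - 1) ≤
          ((n' + 1 : ℕ) : ℝ) * a (n' + 1) * a m :=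
        pair_ineq hs hsK ha1 ha2 (Nat.le_add_left 1 n') h2 (by omega) hc
      simp only [Nat.add_sub_cancel] at hf2
      push_cast
      push_cast at hf2
      nlinarith
    · -- n' + 1 ≤ m + 1, i.e. n' ≤ m : first factor ≥ 0, second ≤ 0
      have hf1 : x ^ m * y ^ n' ≤ y ^ m * x ^ n' := pow_cross hx hxy (by omega)
      have hf2 : ((n' : ℝ) + 1) * a (n' + 1) * a ((m + 1) - 1) ≤
          ((m + 1 : ℕ) : ℝ) * a (m + 1) * a n' := by
        have := pair_ineq hs hsK ha1 ha2 (Nat.le_add_left 1 m) (by omega) (n := m + 1)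
          (m := n') (by omega) (by omega)
        simpa using this
      simp only [Nat.add_sub_cancel] at hf2
      push_cast
      push_cast at hf2
      nlinarith
  have hsum : ∑ p ∈ S, F p ≤ 0 := by
    have h2 : (2:ℝ) * ∑ p ∈ S, F p = ∑ p ∈ S, (F p + F (p.2 + 1, p.1 - 1)) := by
      rw [Finset.sum_add_distrib, e2]; ring
    have h3 : ∑ p ∈ S, (F p + F (p.2 + 1, p.1 - 1)) ≤ 0 := Finset.sum_nonpos hterm
    linarith
  linarith [key, hsum]

lemma wfun_monotoneOn {mu : ℝ} (hmu : 0 < mu) :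
    MonotoneOn (wfun a K mu) (Set.Ici (0 : ℝ)) := by
  have hpos : ∀ n ≤ K, 0 < a n := fun n hn => a_pos hs hsK ha1 ha2 hn
  have hK : 0 < K := lt_of_lt_of_le hs hsK
  intro x hx y hy hxy
  have hx' : (0:ℝ) ≤ x := hx
  have hy' : (0:ℝ) ≤ y := hy
  have dx := Df_pos hK hpos hx'
  have dy := Df_pos hK hpos hy'
  rw [wfun, wfun, div_le_div_iff₀ (mul_pos hmu dx) (mul_pos hmu dy)]
  have hcross := Nf_Df_cross hs hsK ha1 ha2 hx' hxy
  nlinarith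

end funs

section analysis

/-- convexity of `lam ↦ ∫_0^lam g` for continuous monotone `g`. -/
lemma convexOn_integral_of_monotone {g : ℝ → ℝ} (hgc : Continuous g) (hgm : Monotone g) :
    ConvexOn ℝ Set.univ (fun lam => ∫ q in (0:ℝ)..lam, g q) := by
  have hd : ∀ b : ℝ, HasDerivAt (fun u => ∫ q in (0:ℝ)..u, g q) (g b) b := fun b =>
    (hgc.integral_hasStrictDerivAt 0 b).hasDerivAt
  refine MonotoneOn.convexOn_of_deriv convex_univ ?_ ?_ ?_
  · exact (continuous_iff_continuousAt.mpr fun b => (hd b).continuousAt).continuousOn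
  · intro b _
    exact (hd b).differentiableAt.differentiableWithinAt
  · intro b _ c _ hbc
    rw [(hd b).deriv, (hd c).deriv]
    exact hgm hbc

variable {s K : ℕ} {a : ℕ → ℝ} {mu : ℝ}

/-- globalized balking probability in terms of `lam`. -/
noncomputable def Pg (a : ℕ → ℝ) (K : ℕ) (mu : ℝ) (lam : ℝ) : ℝ :=
  pfun a K (max lam 0 / mu)

/-- globalized waiting time in terms of `lam`. -/
noncomputable def Wg (a : ℕ → ℝ) (K : ℕ) (mu : ℝ) (lam : ℝ) : ℝ :=
  wfun a K mu (max lam 0 / mu)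

lemma clamp_mem (hmu : 0 < mu) (lam : ℝ) : max lam 0 / mu ∈ Set.Ici (0:ℝ) :=
  div_nonneg (le_max_right _ _) hmu.le

lemma clamp_mono' (hmu : 0 < mu) {x y : ℝ} (h : x ≤ y) : max x 0 / mu ≤ max y 0 / mu := by
  gcongr

lemma clamp_continuous (hmu : 0 < mu) : Continuous fun lam : ℝ => max lam 0 / mu :=
  (continuous_id.max continuous_const).div_const mu

lemma Pg_continuous (hmu : 0 < mu) (hpos : ∀ n ≤ K, 0 < a n) :
    Continuous (Pg a K mu) := by
  unfold Pg pfun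
  refine Continuous.div (by fun_prop) ?_ ?_
  · exact continuous_finset_sum _ fun m _ => by fun_prop
  · intro lam
    exact ne_of_gt (pden_pos hpos (clamp_mem hmu lam))

lemma Pg_monotone (hmu : 0 < mu) (hpos : ∀ n ≤ K, 0 < a n) :
    Monotone (Pg a K mu) := fun x y h =>
  pfun_monotoneOn hpos (clamp_mem hmu x) (clamp_mem hmu y) (clamp_mono' hmu h)

lemma Wg_continuous (hK : 0 < K) (hmu : 0 < mu) (hpos : ∀ n ≤ K, 0 < a n) :
    Continuous (Wg a K mu) := by
  unfold Wg wfun Nf Df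
  refine Continuous.div ?_ ?_ ?_
  · exact continuous_finset_sum _ fun n _ => by fun_prop
  · exact continuous_const.mul (continuous_finset_sum _ fun m _ => by fun_prop)
  · intro lam
    exact ne_of_gt (mul_pos hmu (Df_pos hK hpos (clamp_mem hmu lam)))

lemma Wg_monotone (hs : 0 < s) (hsK : s ≤ K)
    (ha1 : ∀ n, n < s → a n = 1 / (n.factorial : ℝ))
    (ha2 : ∀ n, s ≤ n → n ≤ K → a n = 1 / ((s : ℝ) ^ (n - s) * (s.factorial : ℝ)))
    (hmu : 0 < mu) :
    Monotone (Wg a K mu) := fun x y h =>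
  wfun_monotoneOn hs hsK ha1 ha2 hmu (clamp_mem hmu x) (clamp_mem hmu y) (clamp_mono' hmu h)

end analysis

section assembly

variable {E : Type*} [AddCommGroup E] [Module ℝ E]

lemma convexOn_finset_sum {S : Set E} (hS : Convex ℝ S) {ι : Type*} (t : Finset ι)
    (f : ι → E → ℝ) (hf : ∀ i ∈ t, ConvexOn ℝ S (f i)) :
    ConvexOn ℝ S (fun x => ∑ i ∈ t, f i x) := by
  classical
  induction t using Finset.induction_on with
  | empty => simpa using convexOn_const 0 hS
  | insert b tt hnot ih =>
    simp only [Finset.sum_insert hnot]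
    exact (hf b (Finset.mem_insert_self _ _)).add
      (ih fun i hi => hf i (Finset.mem_insert_of_mem hi))

lemma convexOn_linear_term {S : Set E} (hS : Convex ℝ S) (l : E →ₗ[ℝ] ℝ) (c : ℝ) :
    ConvexOn ℝ S (fun x => c * l x) := by
  refine ⟨hS, fun x _ y _ p q _ _ _ => le_of_eq ?_⟩
  simp only [l.map_add, l.map_smul, smul_eq_mul]
  ring

end assembly

end LLPC



/-- Proposition 1 of the paper: with `M/M/s_j/K_j` queues at the facilities,
the lower-level (user-equilibrium) objective `G` is convex on the nonnegative
orthant, and consequently the lower-level problem—minimizing `G` over the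
nonnegative orthant intersected with the affine demand/flow constraints—is a
convex optimization problem (convex feasible set and convex objective). -/
theorem lower_level_problem_convex
    {I J : Type*} [Fintype I] [Fintype J] [Nonempty I] [Nonempty J]
    (θ α β : ℝ) (hθ : 0 < θ) (hα : 0 ≤ α) (hβ : 0 ≤ β)
    (t : I → J → ℝ) (d : I → ℝ)
    (s K : J → ℕ) (hs : ∀ j, 0 < s j) (hsK : ∀ j, s j ≤ K j)
    (μ : J → ℝ) (hμ : ∀ j, 0 < μ j)
    (a : J → ℕ → ℝ)
    (ha1 : ∀ j n, n < s j → a j n = 1 / (n.factorial : ℝ))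
    (ha2 : ∀ j n, s j ≤ n → n ≤ K j →
      a j n = 1 / ((s j : ℝ) ^ (n - s j) * ((s j).factorial : ℝ)))
    (pbar wbar : J → ℝ → ℝ)
    (hpbar : ∀ j, ∀ lam : ℝ, 0 ≤ lam →
      pbar j lam = a j (K j) * (lam / μ j) ^ (K j) /
        (∑ m ∈ Finset.range (K j + 1), a j m * (lam / μ j) ^ m))
    (hwbar : ∀ j, ∀ lam : ℝ, 0 ≤ lam →
      wbar j lam =
        (∑ n ∈ Finset.Icc 1 (K j), (n : ℝ) * a j n * (lam / μ j) ^ (n - 1)) /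
          (μ j * ∑ m ∈ Finset.range (K j), a j m * (lam / μ j) ^ m))
    (G : (I → J → ℝ) × (J → ℝ) → ℝ)
    (hG : ∀ (y : I → J → ℝ) (lam : J → ℝ),
      G (y, lam) =
        (∑ i : I, ∑ j : J,
          ((1 / θ) * (y i j * Real.log (y i j)) + t i j * y i j)) +
        ∑ j : J,
          (α * (∫ q in (0 : ℝ)..(lam j), wbar j q) +
            β * (∫ q in (0 : ℝ)..(lam j), pbar j q))) :
    ConvexOn ℝ
        {z : (I → J → ℝ) × (J → ℝ) |
          (∀ i j, 0 ≤ z.1 i j) ∧ (∀ j, 0 ≤ z.2 j)} G ∧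
      Convex ℝ
        ({z : (I → J → ℝ) × (J → ℝ) |
            (∀ i j, 0 ≤ z.1 i j) ∧ (∀ j, 0 ≤ z.2 j)} ∩
          {z : (I → J → ℝ) × (J → ℝ) |
            (∀ i, ∑ j : J, z.1 i j = d i) ∧ (∀ j, z.2 j = ∑ i : I, z.1 i j)}) ∧
      ConvexOn ℝ
        ({z : (I → J → ℝ) × (J → ℝ) |
            (∀ i j, 0 ≤ z.1 i j) ∧ (∀ j, 0 ≤ z.2 j)} ∩
          {z : (I → J → ℝ) × (J → ℝ) |
            (∀ i, ∑ j : J, z.1 i j = d i) ∧ (∀ j, z.2 j = ∑ i : I, z.1 i j)}) G := by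
  
  classical
  set S0 : Set ((I → J → ℝ) × (J → ℝ)) :=
    {z | (∀ i j, 0 ≤ z.1 i j) ∧ (∀ j, 0 ≤ z.2 j)} with hS0def
  set A : Set ((I → J → ℝ) × (J → ℝ)) :=
    {z | (∀ i, ∑ j : J, z.1 i j = d i) ∧ (∀ j, z.2 j = ∑ i : I, z.1 i j)} with hAdef
  have hpos : ∀ j, ∀ n ≤ K j, 0 < a j n :=
    fun j n hn => LLPC.a_pos (hs j) (hsK j) (ha1 j) (ha2 j) hn
  -- convexity of the orthant
  have hS0 : Convex ℝ S0 := by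
    intro x hx y hy p q hp hq _
    obtain ⟨hx1, hx2⟩ := hx
    obtain ⟨hy1, hy2⟩ := hy
    refine ⟨fun i j => ?_, fun j => ?_⟩
    · show 0 ≤ p * x.1 i j + q * y.1 i j
      exact add_nonneg (mul_nonneg hp (hx1 i j)) (mul_nonneg hq (hy1 i j))
    · show 0 ≤ p * x.2 j + q * y.2 j
      exact add_nonneg (mul_nonneg hp (hx2 j)) (mul_nonneg hq (hy2 j))
  -- convexity of the affine constraint set
  have hA : Convex ℝ A := by
    intro x hx y hy p q hp hq hpq
    obtain ⟨hx1, hx2⟩ := hx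
    obtain ⟨hy1, hy2⟩ := hy
    refine ⟨fun i => ?_, fun j => ?_⟩
    · show ∑ j : J, (p * x.1 i j + q * y.1 i j) = d i
      rw [Finset.sum_add_distrib, ← Finset.mul_sum, ← Finset.mul_sum, hx1 i, hy1 i,
        ← add_mul, hpq, one_mul]
    · show p * x.2 j + q * y.2 j = ∑ i : I, (p * x.1 i j + q * y.1 i j)
      rw [hx2 j, hy2 j, Finset.mul_sum, Finset.mul_sum, ← Finset.sum_add_distrib]
  -- linear projections
  let L1 : I → J → (((I → J → ℝ) × (J → ℝ)) →ₗ[ℝ] ℝ) := fun i j =>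
    (LinearMap.proj j).comp ((LinearMap.proj i).comp (LinearMap.fst ℝ (I → J → ℝ) (J → ℝ)))
  let L2 : J → (((I → J → ℝ) × (J → ℝ)) →ₗ[ℝ] ℝ) := fun j =>
    (LinearMap.proj j).comp (LinearMap.snd ℝ (I → J → ℝ) (J → ℝ))
  -- the integral functions
  let FW : J → ℝ → ℝ := fun j u => ∫ q in (0:ℝ)..u, LLPC.Wg (a j) (K j) (μ j) q
  let FP : J → ℝ → ℝ := fun j u => ∫ q in (0:ℝ)..u, LLPC.Pg (a j) (K j) (μ j) q
  have hFWc : ∀ j, ConvexOn ℝ Set.univ (FW j) := fun j =>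
    LLPC.convexOn_integral_of_monotone
      (LLPC.Wg_continuous (lt_of_lt_of_le (hs j) (hsK j)) (hμ j) (hpos j))
      (LLPC.Wg_monotone (hs j) (hsK j) (ha1 j) (ha2 j) (hμ j))
  have hFPc : ∀ j, ConvexOn ℝ Set.univ (FP j) := fun j =>
    LLPC.convexOn_integral_of_monotone
      (LLPC.Pg_continuous (hμ j) (hpos j))
      (LLPC.Pg_monotone (hμ j) (hpos j))
  -- the globalized objective
  let Gt : ((I → J → ℝ) × (J → ℝ)) → ℝ := fun z =>
    (∑ i : I, ∑ j : J,
      ((1 / θ) * (z.1 i j * Real.log (z.1 i j)) + t i j * z.1 i j)) +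
    ∑ j : J, (α * FW j (z.2 j) + β * FP j (z.2 j))
  have hGt : ConvexOn ℝ S0 Gt := by
    refine ConvexOn.add ?_ ?_
    · refine LLPC.convexOn_finset_sum hS0 Finset.univ _ (fun i _ => ?_)
      refine LLPC.convexOn_finset_sum hS0 Finset.univ _ (fun j _ => ?_)
      refine ConvexOn.add ?_ ?_
      · have h0 := (Real.convexOn_mul_log.comp_linearMap (L1 i j)).subset
          (fun z hz => hz.1 i j) hS0
        have h1 := h0.smul (le_of_lt (one_div_pos.mpr hθ))
        exact h1
      · exact LLPC.convexOn_linear_term hS0 (L1 i j) (t i j)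
    · refine LLPC.convexOn_finset_sum hS0 Finset.univ _ (fun j _ => ?_)
      refine ConvexOn.add ?_ ?_
      · have h0 := ((hFWc j).comp_linearMap (L2 j)).subset
          (fun z _ => Set.mem_univ _) hS0
        exact h0.smul hα
      · have h0 := ((hFPc j).comp_linearMap (L2 j)).subset
          (fun z _ => Set.mem_univ _) hS0
        exact h0.smul hβ
  -- G agrees with Gt on S0
  have hGeq : ∀ z ∈ S0, G z = Gt z := by
    rintro ⟨y, lam⟩ ⟨-, hlam⟩
    rw [hG y lam]
    congr 1
    refine Finset.sum_congr rfl fun j _ => ?_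
    have h0j : (0:ℝ) ≤ lam j := hlam j
    have hw : (∫ q in (0:ℝ)..(lam j), wbar j q) = FW j (lam j) := by
      refine intervalIntegral.integral_congr fun q hq => ?_
      rw [Set.uIcc_of_le h0j] at hq
      have hq0 : 0 ≤ q := hq.1
      rw [hwbar j q hq0]
      simp only [LLPC.Wg, LLPC.wfun, LLPC.Nf, LLPC.Df, max_eq_left hq0]
    have hp : (∫ q in (0:ℝ)..(lam j), pbar j q) = FP j (lam j) := by
      refine intervalIntegral.integral_congr fun q hq => ?_
      rw [Set.uIcc_of_le h0j] at hq
      have hq0 : 0 ≤ q := hq.1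
      rw [hpbar j q hq0]
      simp only [LLPC.Pg, LLPC.pfun, max_eq_left hq0]
    rw [hw, hp]
  -- convexity of G on S0
  have hmain : ConvexOn ℝ S0 G := by
    refine ⟨hS0, fun x hx y hy p q hp hq hpq => ?_⟩
    have hz : p • x + q • y ∈ S0 := hS0 hx hy hp hq hpq
    rw [smul_eq_mul, smul_eq_mul, hGeq _ hz, hGeq _ hx, hGeq _ hy]
    have := hGt.2 hx hy hp hq hpq
    simpa using this
  exact ⟨hmain, hS0.inter hA, hmain.subset Set.inter_subset_left (hS0.inter hA)⟩
end
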